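/- arXiv:1207.4854 — 8 statements merged into one kernel-verified Lean document; each statement's English description precedes it below -/
import Mathlib

section
/- Let e ∈ ℝⁿ have i.i.d. entries e_i ~ N(0, σ²), and let X̃ be an n×p real matrix whose columns X̃_i each have unit Euclidean norm. Define the event E = {e : for all γ ∈ {0,1}^p, ‖X̃_γᵀ e‖₂² ≤ 4σ²(1+α)|γ| log p}, where X̃_γ is the submatrix of X̃ consisting of columns i with γ_i = 1 and |γ| is the number of ones in γ. Then Pr(E) > 1 - 1/(p^α √(π log p)). -/
/-!
If every correlation `|X̃ᵢᵀ e|` is at most `t = σ √(4 (1 + α) log p)`, then each sum over a support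
`γ` is at most `|γ| t²`, so this event is contained in `E`. Since the columns have unit norm, each
`X̃ᵢᵀ e` is `N(0, σ²)`; the Mills-ratio tail bound and a union bound over the `p` columns bound the
probability of the complement by `p^{-(1+2α)} / √(2π (1 + α) log p)`, which is smaller than both `1`
and `p^{-α} / √(π log p)`.
-/

open MeasureTheory ProbabilityTheory Real Set Filter
open scoped NNReal ENNReal Topology

section GaussianSum
variable {ι : Type*} [Fintype ι]

lemma map_pi_gaussianReal_sum (m : ι → ℝ) (v : ι → ℝ≥0) :
    (Measure.pi fun i => gaussianReal (m i) (v i)).map (fun x => ∑ i, x i) =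
      gaussianReal (∑ i, m i) (∑ i, v i) := by
  refine Measure.ext_of_charFun (funext fun t => ?_)
  rw [charFun_map_sum_pi_eq_prod, Finset.prod_apply]
  simp_rw [charFun_gaussianReal, ← Complex.exp_sum]
  congr 1
  push_cast
  simp only [Finset.sum_sub_distrib, Finset.sum_div, Finset.sum_mul, Finset.mul_sum]

lemma map_pi_gaussianReal_weightedSum (a m : ι → ℝ) (v : ι → ℝ≥0) :
    (Measure.pi fun i => gaussianReal (m i) (v i)).map (fun x => ∑ i, a i * x i) =
      gaussianReal (∑ i, a i * m i) (∑ i, (a i ^ 2).toNNReal * v i) := by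
  have hscale : (Measure.pi fun i => gaussianReal (m i) (v i)).map (fun x i => a i * x i) =
      Measure.pi fun i => gaussianReal (a i * m i) ((a i ^ 2).toNNReal * v i) := by
    rw [Measure.pi_map_pi (f := fun i x => a i * x) fun i => (measurable_const_mul _).aemeasurable]
    simp_rw [gaussianReal_map_const_mul, Real.toNNReal_of_nonneg (sq_nonneg _)]
  rw [← map_pi_gaussianReal_sum, ← hscale, Measure.map_map (by fun_prop) (by fun_prop)]
  rfl

end GaussianSum

section GaussianTail

variable {v : ℝ≥0}

lemma hasDerivAt_gaussianPDFReal (μ x : ℝ) :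
    HasDerivAt (gaussianPDFReal μ v) (-((x - μ) / v) * gaussianPDFReal μ v x) x := by
  have h : HasDerivAt (fun y => -(y - μ) ^ 2 / (2 * v)) (-((x - μ) / v)) x := by
    refine (((hasDerivAt_id' x).sub_const μ).fun_pow 2).fun_neg.div_const (2 * (v : ℝ))
      |>.congr_deriv ?_
    by_cases hv : (v : ℝ) = 0
    · simp [hv]
    · field_simp; ring
  rw [gaussianPDFReal_def]
  exact (h.exp.const_mul (√(2 * π * v))⁻¹).congr_deriv (by ring)

lemma tendsto_gaussianPDFReal_atTop (μ : ℝ) (hv : v ≠ 0) :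
    Tendsto (gaussianPDFReal μ v) atTop (𝓝 0) := by
  have hv' : (0 : ℝ) < 2 * v := by have := pos_iff_ne_zero.2 hv; positivity
  rw [gaussianPDFReal_def, ← mul_zero (√(2 * π * v))⁻¹]
  refine (tendsto_exp_atBot.comp ?_).const_mul _
  refine Tendsto.atBot_div_const hv' (tendsto_neg_atTop_atBot.comp ?_)
  exact (tendsto_pow_atTop two_ne_zero).comp (tendsto_atTop_add_const_right _ (-μ) tendsto_id)

lemma integrable_sub_mul_gaussianPDFReal (μ : ℝ) (hv : v ≠ 0) :
    Integrable fun x => (x - μ) * gaussianPDFReal μ v x := by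
  have hb : (0 : ℝ) < (2 * (v : ℝ))⁻¹ := by have := pos_iff_ne_zero.2 hv; positivity
  refine (((integrable_mul_exp_neg_mul_sq hb).const_mul (√(2 * π * v))⁻¹).comp_sub_right μ).congr
    (ae_of_all _ fun x => ?_)
  simp only [gaussianPDFReal_def]
  field_simp

lemma integral_Ioi_sub_mul_gaussianPDFReal (μ : ℝ) (hv : v ≠ 0) (t : ℝ) :
    ∫ x in Ioi t, (x - μ) * gaussianPDFReal μ v x = v * gaussianPDFReal μ v t := by
  have hv' : (v : ℝ) ≠ 0 := by exact_mod_cast hv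
  have hderiv : ∀ x ∈ Ici t, HasDerivAt (fun x => -(v : ℝ) * gaussianPDFReal μ v x)
      ((x - μ) * gaussianPDFReal μ v x) x := fun x _ =>
    ((hasDerivAt_gaussianPDFReal μ x).const_mul (-(v : ℝ))).congr_deriv (by field_simp)
  rw [integral_Ioi_of_hasDerivAt_of_tendsto' hderiv
    (integrable_sub_mul_gaussianPDFReal μ hv).integrableOn
    ((tendsto_gaussianPDFReal_atTop μ hv).const_mul _)]
  ring

lemma gaussianReal_Ioi_le (hv : v ≠ 0) {t : ℝ} (ht : 0 < t) :
    gaussianReal 0 v (Ioi t) ≤ ENNReal.ofReal (v / t * gaussianPDFReal 0 v t) := by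
  rw [gaussianReal_apply_eq_integral 0 hv]
  gcongr
  -- on `(t, ∞)` we have `1 ≤ x / t`, and `x ↦ x φ(x)` has the explicit antiderivative `-v φ`
  calc ∫ x in Ioi t, gaussianPDFReal 0 v x
      ≤ ∫ x in Ioi t, t⁻¹ * ((x - 0) * gaussianPDFReal 0 v x) := by
        refine setIntegral_mono_on (integrable_gaussianPDFReal 0 v).integrableOn
          ((integrable_sub_mul_gaussianPDFReal 0 hv).const_mul _).integrableOn
          measurableSet_Ioi fun x hx => ?_
        rw [sub_zero, ← mul_assoc]
        exact le_mul_of_one_le_left (gaussianPDFReal_nonneg 0 v x)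
          ((one_le_inv_mul₀ ht).2 (le_of_lt hx))
    _ = v / t * gaussianPDFReal 0 v t := by
        rw [integral_const_mul, integral_Ioi_sub_mul_gaussianPDFReal 0 hv]
        ring

end GaussianTail

lemma gaussianReal_abs_gt_mul_le {σ s : ℝ} (hσ : 0 < σ) (hs : 0 < s) :
    gaussianReal 0 (σ ^ 2).toNNReal {x | σ * s < |x|} ≤
      ENNReal.ofReal (exp (-s ^ 2 / 2) / (s * √(π / 2))) := by
  set v := (σ ^ 2).toNNReal
  have hv_eq : (v : ℝ) = σ ^ 2 := Real.coe_toNNReal _ (sq_nonneg σ)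
  have hv : v ≠ 0 := by simp [v, hσ.ne']
  have hsplit : {x : ℝ | σ * s < |x|} = Ioi (σ * s) ∪ Iio (-(σ * s)) := by
    ext x; simp [lt_abs, lt_neg]
  have hsymm : gaussianReal 0 v (Iio (-(σ * s))) = gaussianReal 0 v (Ioi (σ * s)) := by
    conv_lhs => rw [← neg_zero, ← gaussianReal_map_neg]
    rw [Measure.map_apply measurable_neg measurableSet_Iio]
    simp
  have hbound : 2 * (v / (σ * s) * gaussianPDFReal 0 v (σ * s)) =
      exp (-s ^ 2 / 2) / (s * √(π / 2)) := by
    have hsqrt : √(2 * π * σ ^ 2) = 2 * √(π / 2) * σ := by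
      rw [show 2 * π * σ ^ 2 = (2 * σ) ^ 2 * (π / 2) by ring, sqrt_mul (by positivity),
        sqrt_sq (by positivity)]
      ring
    have hexp : -(σ * s - 0) ^ 2 / (2 * σ ^ 2) = -s ^ 2 / 2 := by field_simp; ring
    rw [gaussianPDFReal, hv_eq, hsqrt, hexp]
    field_simp
  have h0 : 0 ≤ v / (σ * s) * gaussianPDFReal 0 v (σ * s) := by
    have := gaussianPDFReal_nonneg 0 v (σ * s); positivity
  calc gaussianReal 0 v {x | σ * s < |x|}
      ≤ gaussianReal 0 v (Ioi (σ * s)) + gaussianReal 0 v (Iio (-(σ * s))) := by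
        rw [hsplit]; exact measure_union_le _ _
    _ ≤ _ := by
        rw [hsymm, ← hbound, two_mul, ENNReal.ofReal_add h0 h0]
        have hσs : 0 < σ * s := mul_pos hσ hs
        exact add_le_add (gaussianReal_Ioi_le hv hσs) (gaussianReal_Ioi_le hv hσs)

lemma hasLaw_sum_mul_pi_gaussianReal {ι : Type*} [Fintype ι] (v : ℝ≥0) {a : ι → ℝ}
    (ha : ∑ i, a i ^ 2 = 1) :
    HasLaw (fun x => ∑ i, a i * x i) (gaussianReal 0 v)
      (Measure.pi fun _ : ι => gaussianReal 0 v) := by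
  refine ⟨(Finset.measurable_sum _ fun i _ => (measurable_pi_apply i).const_mul _).aemeasurable, ?_⟩
  rw [map_pi_gaussianReal_weightedSum]
  simp only [mul_zero, Finset.sum_const_zero, ← Finset.sum_mul]
  rw [← Real.toNNReal_sum_of_nonneg fun i _ => sq_nonneg _, ha, Real.toNNReal_one, one_mul]

lemma one_sub_card_mul_le_measure_forall_abs_le {Ω ι : Type*} [MeasurableSpace Ω] [Fintype ι]
    {P : Measure Ω} [IsProbabilityMeasure P] {X : ι → Ω → ℝ} {σ s : ℝ}
    (hX : ∀ i, HasLaw (X i) (gaussianReal 0 (σ ^ 2).toNNReal) P) (hσ : 0 < σ) (hs : 0 < s) :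
    1 - Fintype.card ι * ENNReal.ofReal (exp (-s ^ 2 / 2) / (s * √(π / 2))) ≤
      P {ω | ∀ i, |X i ω| ≤ σ * s} := by
  have hmeas : MeasurableSet {x : ℝ | σ * s < |x|} :=
    measurableSet_lt measurable_const measurable_abs
  have hcompl : {ω | ∀ i, |X i ω| ≤ σ * s}ᶜ = ⋃ i, {ω | σ * s < |X i ω|} := by
    ext ω; simp
  have hbad : P {ω | ∀ i, |X i ω| ≤ σ * s}ᶜ ≤
      Fintype.card ι * ENNReal.ofReal (exp (-s ^ 2 / 2) / (s * √(π / 2))) :=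
    calc P {ω | ∀ i, |X i ω| ≤ σ * s}ᶜ ≤ ∑ i, P {ω | σ * s < |X i ω|} := by
          rw [hcompl]; exact measure_iUnion_fintype_le _ _
      _ ≤ ∑ _i : ι, ENNReal.ofReal (exp (-s ^ 2 / 2) / (s * √(π / 2))) := by
          gcongr with i
          rw [(hX i).measure_eq hmeas]
          exact gaussianReal_abs_gt_mul_le hσ hs
      _ = _ := by rw [Finset.sum_const, Finset.card_univ, nsmul_eq_mul]
  rw [tsub_le_iff_right, ← measure_univ (μ := P)]
  exact (measure_univ_le_add_compl _).trans (add_le_add_right hbad _)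

lemma mul_gaussian_tail_lt {p α s : ℝ} (hp : 2 ≤ p) (hα : 0 < α) (hs : 0 < s)
    (hs2 : s ^ 2 = 4 * (1 + α) * log p) :
    p * (exp (-s ^ 2 / 2) / (s * √(π / 2))) < 1 ∧
      p * (exp (-s ^ 2 / 2) / (s * √(π / 2))) < 1 / (p ^ α * √(π * log p)) := by
  have hL0 : 0 < log p := (log_pos one_lt_two).trans_le (log_le_log two_pos hp)
  have hden : s * √(π / 2) = √(2 * π * (1 + α) * log p) := by
    rw [← sqrt_sq hs.le, ← sqrt_mul (sq_nonneg s), hs2]; ring_nf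
  have hnum : p * exp (-s ^ 2 / 2) = exp (-(1 + 2 * α) * log p) := by
    rw [hs2, ← exp_log (by linarith : 0 < p), ← exp_add, log_exp]; ring_nf
  rw [hden, ← mul_div_assoc, hnum]
  have hexp : exp (-(1 + 2 * α) * log p) < 1 := exp_lt_one_iff.2 (by nlinarith)
  constructor
  · have : 1 < √(2 * π * (1 + α) * log p) := by
      rw [lt_sqrt zero_le_one]
      nlinarith [pi_gt_three, log_two_gt_d9, log_le_log two_pos hp]
    rw [div_lt_one (by linarith)]; linarith
  · have hS : √(π * log p) < √(2 * π * (1 + α) * log p) :=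
      sqrt_lt_sqrt (by positivity)
        (by nlinarith [mul_pos hα (mul_pos pi_pos hL0), mul_pos pi_pos hL0])
    have hpow : exp (-(1 + 2 * α) * log p) * p ^ α < 1 := by
      rw [rpow_def_of_pos (by linarith), ← exp_add, exp_lt_one_iff]; nlinarith
    rw [div_lt_div_iff₀ (by positivity) (by positivity), one_mul, ← mul_assoc]
    calc exp (-(1 + 2 * α) * log p) * p ^ α * √(π * log p) < 1 * √(π * log p) := by gcongr
      _ < √(2 * π * (1 + α) * log p) := by rwa [one_mul]

theorem gaussian_noise_event_bound (n p : ℕ) (σ α : ℝ) (hσ : 0 < σ) (hα : 0 < α)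
    (hp : 1 < p)
    (Xt : Matrix (Fin n) (Fin p) ℝ)
    (hcol : ∀ i : Fin p, ∑ j, (Xt j i) ^ 2 = 1) :
    (Measure.pi fun _ : Fin n => gaussianReal 0 (Real.toNNReal (σ ^ 2)))
      {e : Fin n → ℝ | ∀ γ : Finset (Fin p),
        ∑ i ∈ γ, (∑ j, Xt j i * e j) ^ 2 ≤
          4 * σ ^ 2 * (1 + α) * γ.card * Real.log p} >
      ENNReal.ofReal (1 - 1 / ((p : ℝ) ^ α * Real.sqrt (Real.pi * Real.log p))) := by
  have hp2 : (2 : ℝ) ≤ p := by exact_mod_cast hp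
  set s := √(4 * (1 + α) * log p)
  have hs : 0 < s := sqrt_pos.2 (by have := log_pos (by linarith : (1 : ℝ) < p); positivity)
  have hs2 : s ^ 2 = 4 * (1 + α) * log p := sq_sqrt (by positivity)
  obtain ⟨hq1, hqD⟩ := mul_gaussian_tail_lt hp2 hα hs hs2
  have hgood : {e : Fin n → ℝ | ∀ i, |∑ j, Xt j i * e j| ≤ σ * s} ⊆
      {e | ∀ γ : Finset (Fin p), ∑ i ∈ γ, (∑ j, Xt j i * e j) ^ 2 ≤
        4 * σ ^ 2 * (1 + α) * γ.card * Real.log p} := fun e he γ =>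
    (Finset.sum_le_card_nsmul _ _ _ fun i _ =>
      sq_le_sq' (abs_le.1 (he i)).1 (abs_le.1 (he i)).2).trans_eq
        (by rw [nsmul_eq_mul, mul_pow, hs2]; ring)
  calc ENNReal.ofReal (1 - 1 / ((p : ℝ) ^ α * √(π * log p)))
      < ENNReal.ofReal (1 - p * (exp (-s ^ 2 / 2) / (s * √(π / 2)))) :=
        (ENNReal.ofReal_lt_ofReal_iff (by linarith)).2 (by linarith)
    _ = 1 - Fintype.card (Fin p) * ENNReal.ofReal (exp (-s ^ 2 / 2) / (s * √(π / 2))) := by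
        rw [ENNReal.ofReal_sub _ (by positivity), ENNReal.ofReal_one,
          ENNReal.ofReal_mul (Nat.cast_nonneg _), ENNReal.ofReal_natCast, Fintype.card_fin]
    _ ≤ _ := one_sub_card_mul_le_measure_forall_abs_le
        (fun i => hasLaw_sum_mul_pi_gaussianReal _ (hcol i)) hσ hs
    _ ≤ _ := measure_mono hgood
end

section
/- Let X be an n×p real matrix satisfying the restricted isometry property at level 2S with constant δ < 1 (after scaling: for all b with support of size at most 2S, n(1-δ)‖b‖₂² ≤ ‖Xb‖₂² ≤ n(1+δ)‖b‖₂²). For γ ∈ {0,1}^p with |γ| ≤ 2S, let P_γ be the orthogonal projection onto the column span of X_γ. Then ‖P_γ - X_γ(X_γᵀX_γ + (σ²/V²)I)^{-1}X_γᵀ‖_{op} ≤ σ²/(n(1-δ)V² + σ²), and ‖I - (X_γᵀX_γ + (σ²/V²)I)^{-1}X_γᵀX_γ‖_{op} ≤ σ²/(n(1-δ)V² + σ²). -/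
open Matrix

namespace ProjApproxAux

noncomputable def en {ι : Type*} [Fintype ι] (f : ι → ℝ) : ℝ := Real.sqrt (f ⬝ᵥ f)

lemma dot_self_eq_sum_sq {ι : Type*} [Fintype ι] (f : ι → ℝ) : f ⬝ᵥ f = ∑ i, f i ^ 2 := by
  simp [dotProduct, sq]

lemma dot_self_nonneg {ι : Type*} [Fintype ι] (f : ι → ℝ) : 0 ≤ f ⬝ᵥ f := by
  rw [dot_self_eq_sum_sq]; positivity

lemma en_nonneg {ι : Type*} [Fintype ι] (f : ι → ℝ) : 0 ≤ en f := Real.sqrt_nonneg _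

lemma en_sq {ι : Type*} [Fintype ι] (f : ι → ℝ) : en f ^ 2 = f ⬝ᵥ f :=
  Real.sq_sqrt (dot_self_nonneg f)

lemma dot_self_pos {ι : Type*} [Fintype ι] {f : ι → ℝ} (hf : f ≠ 0) : 0 < f ⬝ᵥ f := by
  rcases (dot_self_nonneg f).lt_or_eq with h | h
  · exact h
  · exfalso; apply hf
    rw [dot_self_eq_sum_sq] at h
    funext i
    have := (Finset.sum_eq_zero_iff_of_nonneg (fun i _ => sq_nonneg (f i))).mp h.symm i
      (Finset.mem_univ i)
    exact pow_eq_zero_iff (n := 2) (by norm_num) |>.mp this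

lemma en_pos {ι : Type*} [Fintype ι] {f : ι → ℝ} (hf : f ≠ 0) : 0 < en f :=
  Real.sqrt_pos.mpr (dot_self_pos hf)

lemma en_smul {ι : Type*} [Fintype ι] (c : ℝ) (hc : 0 ≤ c) (f : ι → ℝ) :
    en (c • f) = c * en f := by
  have : (c • f) ⬝ᵥ (c • f) = c ^ 2 * (f ⬝ᵥ f) := by
    simp [smul_dotProduct, dotProduct_smul, smul_eq_mul]; ring
  rw [en, this, Real.sqrt_mul (sq_nonneg c), Real.sqrt_sq hc, en]

lemma cs {ι : Type*} [Fintype ι] (f g : ι → ℝ) : f ⬝ᵥ g ≤ en f * en g := by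
  have h := Finset.sum_mul_sq_le_sq_mul_sq Finset.univ f g
  have h2 : (f ⬝ᵥ g) ^ 2 ≤ (en f * en g) ^ 2 := by
    rw [mul_pow, en_sq, en_sq, dot_self_eq_sum_sq, dot_self_eq_sum_sq, dotProduct]; exact h
  exact le_of_sq_le_sq h2 (mul_nonneg (en_nonneg f) (en_nonneg g))


variable {m : Type*} [Fintype m] [DecidableEq m]

omit [DecidableEq m] in

lemma quad {nn : ℕ} (Y : Matrix (Fin nn) m ℝ) (u : m → ℝ) :
    u ⬝ᵥ ((Yᵀ * Y) *ᵥ u) = (Y *ᵥ u) ⬝ᵥ (Y *ᵥ u) := by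
  rw [← Matrix.mulVec_mulVec, Matrix.dotProduct_mulVec, Matrix.vecMul_transpose]

lemma key {nn : ℕ} (Y : Matrix (Fin nn) m ℝ) (lam c : ℝ) (hlam : 0 ≤ lam) (hc : 0 < c)
    (hY : ∀ u : m → ℝ, lam * (u ⬝ᵥ u) ≤ (Y *ᵥ u) ⬝ᵥ (Y *ᵥ u))
    (hA : IsUnit (Yᵀ * Y).det) :
    (∀ v : Fin nn → ℝ,
      en ((Y * (Yᵀ * Y)⁻¹ * Yᵀ - Y * (Yᵀ * Y + c • 1)⁻¹ * Yᵀ) *ᵥ v) ≤ c / (lam + c) * en v) ∧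
    (∀ w : m → ℝ,
      en (((1 : Matrix m m ℝ) - (Yᵀ * Y + c • 1)⁻¹ * (Yᵀ * Y)) *ᵥ w) ≤ c / (lam + c) * en w) := by
  set A := Yᵀ * Y with hAdef
  set B := A + c • (1 : Matrix m m ℝ) with hBdef
  have hlc : 0 < lam + c := by linarith
  have hquadB : ∀ u : m → ℝ, u ⬝ᵥ (B *ᵥ u) = (Y *ᵥ u) ⬝ᵥ (Y *ᵥ u) + c * (u ⬝ᵥ u) := by
    intro u
    rw [hBdef, Matrix.add_mulVec, Matrix.smul_mulVec, Matrix.one_mulVec,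
      dotProduct_add, quad, dotProduct_smul, smul_eq_mul]
  have hB : IsUnit B.det := by
    rw [← Matrix.isUnit_iff_isUnit_det, ← Matrix.mulVec_injective_iff_isUnit]
    intro u1 u2 h12
    by_contra hne
    set u : m → ℝ := u1 - u2 with hud
    have hu0 : B *ᵥ u = 0 := by
      rw [hud, Matrix.mulVec_sub, h12, sub_self]
    have hune : u ≠ 0 := sub_ne_zero.mpr hne
    have h0 : u ⬝ᵥ (B *ᵥ u) = 0 := by rw [hu0, dotProduct_zero]
    rw [hquadB u] at h0
    have := dot_self_nonneg (Y *ᵥ u)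
    have h1 := mul_pos hc (dot_self_pos hune)
    linarith
  have hBB : B * B⁻¹ = 1 := Matrix.mul_nonsing_inv B hB
  have hBB' : B⁻¹ * B = 1 := Matrix.nonsing_inv_mul B hB
  have hAA : A * A⁻¹ = 1 := Matrix.mul_nonsing_inv A hA
  have hAA' : A⁻¹ * A = 1 := Matrix.nonsing_inv_mul A hA
  -- core estimate for B
  have core2 : ∀ u : m → ℝ, (lam + c) * en u ≤ en (B *ᵥ u) := by
    intro u
    by_cases hu : u = 0
    · simp [hu, en, Matrix.mulVec_zero]
    · have h1 : (lam + c) * (u ⬝ᵥ u) ≤ u ⬝ᵥ (B *ᵥ u) := by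
        rw [hquadB u]
        have := hY u
        nlinarith [dot_self_nonneg u]
      have h2 : u ⬝ᵥ (B *ᵥ u) ≤ en u * en (B *ᵥ u) := cs u (B *ᵥ u)
      have h3 : (lam + c) * en u ^ 2 ≤ en u * en (B *ᵥ u) := by rw [en_sq]; linarith
      have h4 : 0 < en u := en_pos hu
      rw [sq] at h3
      nlinarith [h3, h4, en_nonneg (B *ᵥ u)]
  constructor
  · -- claim 1
    intro v
    have hcomm : A * B = B * A := by
      rw [hBdef, Matrix.mul_add, Matrix.add_mul, Matrix.mul_smul, Matrix.smul_mul,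
        Matrix.mul_one, Matrix.one_mul]
    have hdiff : A⁻¹ - B⁻¹ = c • (A⁻¹ * B⁻¹) := by
      have h1 : A⁻¹ * (B - A) * B⁻¹ = A⁻¹ - B⁻¹ := by
        rw [Matrix.mul_sub, Matrix.sub_mul, Matrix.mul_assoc, hBB, Matrix.mul_one,
          hAA', Matrix.one_mul]
      have h2 : B - A = c • (1 : Matrix m m ℝ) := by rw [hBdef]; abel
      rw [← h1, h2, Matrix.mul_smul, Matrix.mul_one, Matrix.smul_mul]
    have hmat : Y * A⁻¹ * Yᵀ - Y * B⁻¹ * Yᵀ = c • (Y * (A⁻¹ * B⁻¹) * Yᵀ) := by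
      rw [← Matrix.sub_mul, ← Matrix.mul_sub, hdiff, Matrix.mul_smul, Matrix.smul_mul]
    set u := (A⁻¹ * B⁻¹) *ᵥ (Yᵀ *ᵥ v) with hudef
    have hz : (Y * A⁻¹ * Yᵀ - Y * B⁻¹ * Yᵀ) *ᵥ v = c • (Y *ᵥ u) := by
      rw [hmat, Matrix.smul_mulVec, ← Matrix.mulVec_mulVec, ← Matrix.mulVec_mulVec]
    have hBA : (B * A) * (A⁻¹ * B⁻¹) = 1 := by
      rw [Matrix.mul_assoc B A (A⁻¹ * B⁻¹), ← Matrix.mul_assoc A A⁻¹ B⁻¹, hAA,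
        Matrix.one_mul, hBB]
    have hrec : (B * A) *ᵥ u = Yᵀ *ᵥ v := by
      rw [hudef, Matrix.mulVec_mulVec, hBA, Matrix.one_mulVec]
    have hsym : Aᵀ = A := by rw [hAdef, Matrix.transpose_mul, Matrix.transpose_transpose]
    have hvm : u ᵥ* A = A *ᵥ u := by
      conv_lhs => rw [← hsym]
      rw [Matrix.vecMul_transpose]
    have hinner : (Y *ᵥ u) ⬝ᵥ v = (A *ᵥ u) ⬝ᵥ (A *ᵥ u) + c * ((Y *ᵥ u) ⬝ᵥ (Y *ᵥ u)) := by
      have e1 : (Y *ᵥ u) ⬝ᵥ v = u ⬝ᵥ (Yᵀ *ᵥ v) := by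
        rw [Matrix.dotProduct_mulVec, Matrix.vecMul_transpose, dotProduct_comm]
      rw [e1, ← hrec]
      have e2 : B * A = A * A + c • A := by
        rw [hBdef, Matrix.add_mul, Matrix.smul_mul, Matrix.one_mul]
      rw [e2, Matrix.add_mulVec, dotProduct_add, Matrix.smul_mulVec,
        dotProduct_smul, smul_eq_mul]
      congr 1
      · rw [← Matrix.mulVec_mulVec, Matrix.dotProduct_mulVec, hvm]
      · rw [quad]
    have hlow : lam * ((Y *ᵥ u) ⬝ᵥ (Y *ᵥ u)) ≤ (A *ᵥ u) ⬝ᵥ (A *ᵥ u) := by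
      by_cases hu : u = 0
      · simp [hu, Matrix.mulVec_zero]
      · have c1 : (Y *ᵥ u) ⬝ᵥ (Y *ᵥ u) ≤ en (A *ᵥ u) * en u := by
          rw [← quad, dotProduct_comm]
          exact cs (A *ᵥ u) u
        have c2 := hY u
        have hZ : 0 < en u := en_pos hu
        have hX : 0 ≤ en (A *ᵥ u) := en_nonneg _
        have hsq1 : en u ^ 2 = u ⬝ᵥ u := en_sq u
        have hsq2 : en (A *ᵥ u) ^ 2 = (A *ᵥ u) ⬝ᵥ (A *ᵥ u) := en_sq _
        have ha : 0 ≤ (Y *ᵥ u) ⬝ᵥ (Y *ᵥ u) := dot_self_nonneg _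
        have h6 : ((Y *ᵥ u) ⬝ᵥ (Y *ᵥ u)) ^ 2 ≤ en (A *ᵥ u) ^ 2 * en u ^ 2 := by
          nlinarith [mul_nonneg hX hZ.le]
        have h7 : lam * en u ^ 2 * ((Y *ᵥ u) ⬝ᵥ (Y *ᵥ u)) ≤ ((Y *ᵥ u) ⬝ᵥ (Y *ᵥ u)) ^ 2 := by
          rw [hsq1]; nlinarith
        have hZ2 : 0 < en u ^ 2 := pow_pos hZ 2
        have h8 : (lam * ((Y *ᵥ u) ⬝ᵥ (Y *ᵥ u))) * en u ^ 2 ≤ en (A *ᵥ u) ^ 2 * en u ^ 2 := by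
          nlinarith
        have h9 := le_of_mul_le_mul_right h8 hZ2
        rw [hsq2] at h9
        exact h9
    set t := en (Y *ᵥ u) with htdef
    have ht2 : t ^ 2 = (Y *ᵥ u) ⬝ᵥ (Y *ᵥ u) := en_sq _
    have hchain : (lam + c) * t ^ 2 ≤ t * en v := by
      have hcs : (Y *ᵥ u) ⬝ᵥ v ≤ t * en v := cs _ _
      rw [ht2]; rw [hinner] at hcs
      nlinarith [ht2]
    have hgoal : en ((Y * A⁻¹ * Yᵀ - Y * B⁻¹ * Yᵀ) *ᵥ v) = c * t := by
      rw [hz, en_smul c hc.le]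
    rw [hgoal]
    by_cases htz : t = 0
    · rw [htz, mul_zero]
      exact mul_nonneg (div_nonneg hc.le hlc.le) (en_nonneg v)
    · have htpos : 0 < t := (en_nonneg _).lt_of_ne (Ne.symm htz)
      have h5 : (lam + c) * t ≤ en v := by
        rw [sq] at hchain
        nlinarith [hchain, htpos, en_nonneg v]
      calc c * t = (c / (lam + c)) * ((lam + c) * t) := by field_simp
        _ ≤ (c / (lam + c)) * en v := by
            apply mul_le_mul_of_nonneg_left h5 (div_nonneg hc.le hlc.le)
  · -- claim 2
    intro w
    set u := B⁻¹ *ᵥ w with hudef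
    have hBu : B *ᵥ u = w := by rw [hudef, Matrix.mulVec_mulVec, hBB, Matrix.one_mulVec]
    have hid : (1 : Matrix m m ℝ) - B⁻¹ * A = c • B⁻¹ := by
      have : B⁻¹ * (B - A) = c • B⁻¹ := by
        rw [show B - A = c • (1 : Matrix m m ℝ) by rw [hBdef]; abel, Matrix.mul_smul,
          Matrix.mul_one]
      rw [← this, Matrix.mul_sub, hBB']
    have hz : ((1 : Matrix m m ℝ) - B⁻¹ * A) *ᵥ w = c • u := by
      rw [hid, Matrix.smul_mulVec, hudef]
    rw [hz, en_smul c hc.le]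
    have h5 := core2 u
    rw [hBu] at h5
    calc c * en u = (c / (lam + c)) * ((lam + c) * en u) := by field_simp
      _ ≤ (c / (lam + c)) * en w := by
          apply mul_le_mul_of_nonneg_left h5 (div_nonneg hc.le hlc.le)

end ProjApproxAux


open ProjApproxAux in
theorem projection_approximation_bounds (n p S : ℕ)
    (σ V δ : ℝ) (hσ : 0 < σ) (hV : 0 < V) (hδ0 : 0 ≤ δ) (hδ1 : δ < 1)
    (X : Matrix (Fin n) (Fin p) ℝ)
    (hRIP : ∀ b : Fin p → ℝ, (Finset.univ.filter fun i => b i ≠ 0).card ≤ 2 * S →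
      (n : ℝ) * (1 - δ) * ∑ i, (b i) ^ 2 ≤ ∑ j, (X.mulVec b j) ^ 2 ∧
      ∑ j, (X.mulVec b j) ^ 2 ≤ (n : ℝ) * (1 + δ) * ∑ i, (b i) ^ 2)
    (γ : Finset (Fin p)) (hγ : γ.card ≤ 2 * S)
    (Xγ : Matrix (Fin n) γ ℝ) (hXγ : Xγ = X.submatrix id (Subtype.val : γ → Fin p))
    (hinv : IsUnit (Xγᵀ * Xγ).det)
    (P : Matrix (Fin n) (Fin n) ℝ) (hP : P = Xγ * (Xγᵀ * Xγ)⁻¹ * Xγᵀ) :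
    (∀ v : Fin n → ℝ,
      Real.sqrt (∑ j, ((P - Xγ * (Xγᵀ * Xγ + (σ ^ 2 / V ^ 2) • (1 : Matrix γ γ ℝ))⁻¹ * Xγᵀ).mulVec v j) ^ 2)
        ≤ σ ^ 2 / ((n : ℝ) * (1 - δ) * V ^ 2 + σ ^ 2) * Real.sqrt (∑ j, (v j) ^ 2)) ∧
    (∀ w : γ → ℝ,
      Real.sqrt (∑ i, (((1 : Matrix γ γ ℝ) - (Xγᵀ * Xγ + (σ ^ 2 / V ^ 2) • (1 : Matrix γ γ ℝ))⁻¹ * (Xγᵀ * Xγ)).mulVec w i) ^ 2)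
        ≤ σ ^ 2 / ((n : ℝ) * (1 - δ) * V ^ 2 + σ ^ 2) * Real.sqrt (∑ i, (w i) ^ 2)) := by
  classical
  set c : ℝ := σ ^ 2 / V ^ 2 with hcdef
  set lam : ℝ := (n : ℝ) * (1 - δ) with hlamdef
  have hV2 : (0:ℝ) < V ^ 2 := by positivity
  have hc : 0 < c := by rw [hcdef]; positivity
  have hlam : 0 ≤ lam := mul_nonneg (Nat.cast_nonneg n) (by linarith)
  have hdenpos : 0 < lam * V ^ 2 + σ ^ 2 := by positivity
  have hconst : σ ^ 2 / (lam * V ^ 2 + σ ^ 2) = c / (lam + c) := by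
    rw [hcdef]
    have h2 : (0:ℝ) < lam + σ ^ 2 / V ^ 2 := by positivity
    rw [div_eq_div_iff hdenpos.ne' h2.ne']
    field_simp
  have hY : ∀ u : γ → ℝ, lam * (u ⬝ᵥ u) ≤ (Xγ *ᵥ u) ⬝ᵥ (Xγ *ᵥ u) := by
    intro u
    set b : Fin p → ℝ := fun i => if h : i ∈ γ then u ⟨i, h⟩ else 0 with hbdef
    have hsupp : (Finset.univ.filter fun i => b i ≠ 0) ⊆ γ := by
      intro i hi
      simp only [Finset.mem_filter] at hi
      by_contra hig
      exact hi.2 (by simp [hbdef, hig])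
    have hcard : (Finset.univ.filter fun i => b i ≠ 0).card ≤ 2 * S :=
      le_trans (Finset.card_le_card hsupp) hγ
    have hbsum : ∑ i, b i ^ 2 = u ⬝ᵥ u := by
      rw [dot_self_eq_sum_sq]
      rw [← Finset.sum_subset (Finset.subset_univ γ)
        (fun x _ hx => by simp [hbdef, hx])]
      rw [← Finset.sum_coe_sort γ (fun i => b i ^ 2)]
      refine Finset.sum_congr rfl fun i _ => ?_
      simp [hbdef, i.2]
    have hmv : X *ᵥ b = Xγ *ᵥ u := by
      funext j
      simp only [Matrix.mulVec, dotProduct]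
      rw [← Finset.sum_subset (Finset.subset_univ γ)
        (fun x _ hx => by simp [hbdef, hx])]
      rw [← Finset.sum_coe_sort γ (fun i => X j i * b i)]
      refine Finset.sum_congr rfl fun i _ => ?_
      simp [hbdef, i.2, hXγ, Matrix.submatrix_apply]
    have h1 := (hRIP b hcard).1
    calc lam * (u ⬝ᵥ u) = (n : ℝ) * (1 - δ) * ∑ i, b i ^ 2 := by
          rw [hbsum, hlamdef]
      _ ≤ ∑ j, (X.mulVec b j) ^ 2 := h1
      _ = (Xγ *ᵥ u) ⬝ᵥ (Xγ *ᵥ u) := by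
          rw [dot_self_eq_sum_sq]
          exact Finset.sum_congr rfl fun j _ => by rw [show X.mulVec b = X *ᵥ b from rfl, hmv]
  have hkey := key Xγ lam c hlam hc hY hinv
  constructor
  · intro v
    rw [hP, hconst, ← dot_self_eq_sum_sq, ← dot_self_eq_sum_sq]
    exact hkey.1 v
  · intro w
    rw [hconst, ← dot_self_eq_sum_sq, ← dot_self_eq_sum_sq]
    exact hkey.2 w
end

section
/- Assume the matrix X̃ = X/√n satisfies restricted isometry constant δ = δ_{2S}(X̃) and restricted orthogonality constant θ = θ_{S,2S}(X̃) with δ + θ < 1. Let β⁰ ∈ ℝᵖ be supported on γ⁰ with |γ⁰| ≤ S. For γ, γ′ ∈ {0,1}^p with γ⁰ ≤ γ (entrywise) and |γ′| ≤ 2S, letting P_γ, P_{γ′} denote orthogonal projections onto the column spans of X_γ, X_{γ′}, one has (Xβ⁰)ᵀ(P_{γ′} - P_γ)(Xβ⁰) ≤ -n(1 - δ - θ²/(1-δ))‖β⁰_{γ⁰∖γ′}‖₂², where γ⁰∖γ′ is the set of indices i with γ⁰_i = 1 and γ′_i = 0. -/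
open Matrix

theorem aux_mulVec_restrict {n p : ℕ} (X : Matrix (Fin n) (Fin p) ℝ) (s : Finset (Fin p))
    (v : Fin p → ℝ) (hv : ∀ i ∉ s, v i = 0) :
    X.mulVec v = (X.submatrix id (Subtype.val : s → Fin p)).mulVec (fun i => v i.val) := by
  funext j
  simp only [mulVec, dotProduct, submatrix_apply, id_eq]
  rw [show (∑ x : { x // x ∈ s }, X j x.val * v x.val) = ∑ i ∈ s, X j i * v i from
    Finset.sum_coe_sort s (fun i => X j i * v i)]
  symm
  apply Finset.sum_subset (Finset.subset_univ s)
  intro i _ hi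
  rw [hv i hi, mul_zero]

theorem aux_sum_sq_restrict {p : ℕ} (s : Finset (Fin p)) (v : Fin p → ℝ)
    (hv : ∀ i ∉ s, v i = 0) :
    (∑ i, v i ^ 2) = ∑ i : s, (v i.val) ^ 2 := by
  rw [show (∑ x : { x // x ∈ s }, v x.val ^ 2) = ∑ i ∈ s, v i ^ 2 from
    Finset.sum_coe_sort s (fun i => v i ^ 2)]
  symm
  apply Finset.sum_subset (Finset.subset_univ s)
  intro i _ hi
  rw [hv i hi]; ring

theorem projection_signal_term_bound (n p S : ℕ) (hn : 0 < n)
    (δ θ : ℝ) (hδ0 : 0 ≤ δ) (hθ0 : 0 ≤ θ) (hsum : δ + θ < 1)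
    (X : Matrix (Fin n) (Fin p) ℝ)
    (Xt : Matrix (Fin n) (Fin p) ℝ) (hXt : Xt = (1 / Real.sqrt n) • X)
    -- restricted isometry at level 2S for X̃
    (hRIP : ∀ b : Fin p → ℝ, (Finset.univ.filter fun i => b i ≠ 0).card ≤ 2 * S →
      (1 - δ) * ∑ i, (b i) ^ 2 ≤ ∑ j, (Xt.mulVec b j) ^ 2 ∧
      ∑ j, (Xt.mulVec b j) ^ 2 ≤ (1 + δ) * ∑ i, (b i) ^ 2)
    -- restricted orthogonality constant θ_{S,2S} for X̃
    (hRO : ∀ (b b' : Fin p → ℝ) (T T' : Finset (Fin p)), Disjoint T T' →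
      T.card ≤ S → T'.card ≤ 2 * S →
      (∀ i ∉ T, b i = 0) → (∀ i ∉ T', b' i = 0) →
      |∑ j, Xt.mulVec b j * Xt.mulVec b' j| ≤
        θ * Real.sqrt (∑ i, (b i) ^ 2) * Real.sqrt (∑ i, (b' i) ^ 2))
    (β0 : Fin p → ℝ) (γ0 : Finset (Fin p)) (hγ0 : γ0.card ≤ S)
    (hsupp : ∀ i ∉ γ0, β0 i = 0)
    (γ γ' : Finset (Fin p)) (hγγ0 : γ0 ⊆ γ) (hγ' : γ'.card ≤ 2 * S)
    (Xγ : Matrix (Fin n) γ ℝ) (hXγ : Xγ = X.submatrix id (Subtype.val : γ → Fin p))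
    (Xγ' : Matrix (Fin n) γ' ℝ) (hXγ' : Xγ' = X.submatrix id (Subtype.val : γ' → Fin p))
    (hinvγ : IsUnit (Xγᵀ * Xγ).det) (hinvγ' : IsUnit (Xγ'ᵀ * Xγ').det)
    (Pγ Pγ' : Matrix (Fin n) (Fin n) ℝ)
    (hPγ : Pγ = Xγ * (Xγᵀ * Xγ)⁻¹ * Xγᵀ)
    (hPγ' : Pγ' = Xγ' * (Xγ'ᵀ * Xγ')⁻¹ * Xγ'ᵀ) :
    (X.mulVec β0) ⬝ᵥ ((Pγ' - Pγ).mulVec (X.mulVec β0)) ≤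
      -(n : ℝ) * (1 - δ - θ ^ 2 / (1 - δ)) * ∑ i ∈ γ0 \ γ', (β0 i) ^ 2 := by
  have hδ1 : δ < 1 := by linarith
  have h1δ : (0:ℝ) < 1 - δ := by linarith
  have hn' : (0:ℝ) < n := by exact_mod_cast hn
  -- split β0
  set β₂ : Fin p → ℝ := fun i => if i ∈ γ0 \ γ' then β0 i else 0 with hβ₂
  set β₁ : Fin p → ℝ := fun i => β0 i - β₂ i with hβ₁
  have hβ0 : β0 = β₁ + β₂ := by funext i; simp [hβ₁]
  have hsupp₂ : ∀ i ∉ γ0 \ γ', β₂ i = 0 := fun i hi => if_neg hi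
  have hsupp₁ : ∀ i ∉ γ', β₁ i = 0 := by
    intro i hi
    by_cases h0 : i ∈ γ0
    · have hm : i ∈ γ0 \ γ' := Finset.mem_sdiff.2 ⟨h0, hi⟩
      have h2 : β₂ i = β0 i := if_pos hm
      simp [hβ₁, h2]
    · have h2 : β₂ i = 0 := hsupp₂ i (fun hm => h0 (Finset.mem_sdiff.1 hm).1)
      simp [hβ₁, h2, hsupp i h0]
  -- projection algebra
  have hAs : (Xγ'ᵀ * Xγ')ᵀ = Xγ'ᵀ * Xγ' := by rw [transpose_mul, transpose_transpose]
  have hPγXγ : Pγ * Xγ = Xγ := by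
    rw [hPγ, Matrix.mul_assoc, Matrix.mul_assoc, Matrix.nonsing_inv_mul _ hinvγ, Matrix.mul_one]
  have hPγ'Xγ' : Pγ' * Xγ' = Xγ' := by
    rw [hPγ', Matrix.mul_assoc, Matrix.mul_assoc, Matrix.nonsing_inv_mul _ hinvγ', Matrix.mul_one]
  have Psym : Pγ'ᵀ = Pγ' := by
    rw [hPγ', transpose_mul, transpose_mul, transpose_transpose, transpose_nonsing_inv,
      hAs, Matrix.mul_assoc]
  have Pidem : Pγ' * Pγ' = Pγ' := by
    nth_rewrite 2 [hPγ']
    rw [show Pγ' * (Xγ' * (Xγ'ᵀ * Xγ')⁻¹ * Xγ'ᵀ) =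
        (Pγ' * Xγ') * ((Xγ'ᵀ * Xγ')⁻¹ * Xγ'ᵀ) from by simp only [Matrix.mul_assoc],
      hPγ'Xγ', ← Matrix.mul_assoc, ← hPγ']
  have hsymdot : ∀ x y : Fin n → ℝ, x ⬝ᵥ Pγ'.mulVec y = (Pγ'.mulVec x) ⬝ᵥ y := by
    intro x y
    rw [Matrix.dotProduct_mulVec, ← Psym, Matrix.vecMul_transpose, Psym]
  -- vectors
  set v₁ := X.mulVec β₁ with hv₁
  set v₂ := X.mulVec β₂ with hv₂
  have hu : X.mulVec β0 = v₁ + v₂ := by rw [hβ0, Matrix.mulVec_add]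
  have hsuppγ : ∀ i ∉ γ, β0 i = 0 := fun i hi => hsupp i (fun h => hi (hγγ0 h))
  have hPγu : Pγ.mulVec (X.mulVec β0) = X.mulVec β0 := by
    rw [aux_mulVec_restrict X γ β0 hsuppγ, ← hXγ, Matrix.mulVec_mulVec, hPγXγ]
  have hPv₁ : Pγ'.mulVec v₁ = v₁ := by
    rw [hv₁, aux_mulVec_restrict X γ' β₁ hsupp₁, ← hXγ', Matrix.mulVec_mulVec, hPγ'Xγ']
  set c : γ' → ℝ := ((Xγ'ᵀ * Xγ')⁻¹ * Xγ'ᵀ).mulVec v₂ with hc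
  have hPv₂ : Pγ'.mulVec v₂ = Xγ'.mulVec c := by
    rw [hPγ', Matrix.mul_assoc, ← Matrix.mulVec_mulVec]
  set b : Fin p → ℝ := fun i => if h : i ∈ γ' then c ⟨i, h⟩ else 0 with hb
  have hbsupp : ∀ i ∉ γ', b i = 0 := fun i hi => dif_neg hi
  have hXb : X.mulVec b = Xγ'.mulVec c := by
    have hbc : (fun i : γ' => b i.val) = c := by funext i; exact dif_pos i.2
    rw [aux_mulVec_restrict X γ' b hbsupp, ← hXγ', hbc]
  -- scaling
  have hscale : ∀ w : Fin p → ℝ, ∀ w' : Fin p → ℝ,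
      (∑ j, Xt.mulVec w j * Xt.mulVec w' j) = (1/(n:ℝ)) * ∑ j, X.mulVec w j * X.mulVec w' j := by
    intro w w'
    rw [hXt, Matrix.smul_mulVec, Matrix.smul_mulVec, Finset.mul_sum]
    apply Finset.sum_congr rfl
    intro j _
    simp only [Pi.smul_apply, smul_eq_mul]
    have h9 : (1 / Real.sqrt n) * (1 / Real.sqrt n) = 1/(n:ℝ) := by
      rw [div_mul_div_comm, one_mul, Real.mul_self_sqrt (Nat.cast_nonneg n)]
    calc (1 / Real.sqrt n * X.mulVec w j) * (1 / Real.sqrt n * X.mulVec w' j)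
        = ((1 / Real.sqrt n) * (1 / Real.sqrt n)) * (X.mulVec w j * X.mulVec w' j) := by ring
      _ = 1/(n:ℝ) * (X.mulVec w j * X.mulVec w' j) := by rw [h9]
  have hscale2 : ∀ w : Fin p → ℝ,
      (∑ j, (Xt.mulVec w j) ^ 2) = (1/(n:ℝ)) * ∑ j, (X.mulVec w j) ^ 2 := by
    intro w
    have := hscale w w
    simpa [pow_two] using this
  -- quantities
  set A2 := ∑ i, β₂ i ^ 2 with hA2def
  set N2 := ∑ j, v₂ j ^ 2 with hN2def
  set t := v₂ ⬝ᵥ Pγ'.mulVec v₂ with ht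
  have hA2nn : 0 ≤ A2 := Finset.sum_nonneg fun i _ => sq_nonneg _
  -- cardinalities
  have hcard₂ : (Finset.univ.filter fun i => β₂ i ≠ 0).card ≤ 2 * S := by
    have hsub : (Finset.univ.filter fun i => β₂ i ≠ 0) ⊆ γ0 := by
      intro i hi
      simp only [Finset.mem_filter] at hi
      by_contra h
      exact hi.2 (hsupp₂ i (fun hm => h (Finset.mem_sdiff.1 hm).1))
    have := Finset.card_le_card hsub
    omega
  have hcardb : (Finset.univ.filter fun i => b i ≠ 0).card ≤ 2 * S := by
    have hsub : (Finset.univ.filter fun i => b i ≠ 0) ⊆ γ' := by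
      intro i hi
      simp only [Finset.mem_filter] at hi
      by_contra h
      exact hi.2 (hbsupp i h)
    exact le_trans (Finset.card_le_card hsub) hγ'
  -- RIP applications
  obtain ⟨h2lo, -⟩ := hRIP β₂ hcard₂
  obtain ⟨hblo, -⟩ := hRIP b hcardb
  rw [hscale2 β₂] at h2lo
  rw [hscale2 b] at hblo
  have hi1 : (n:ℝ) * (1-δ) * A2 ≤ N2 := by
    have h := mul_le_mul_of_nonneg_left h2lo hn'.le
    rw [show (n:ℝ) * (1/(n:ℝ) * N2) = N2 from by field_simp] at h
    linarith [h]
  -- q = t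
  have hdot_sq : ∀ x : Fin n → ℝ, x ⬝ᵥ x = ∑ j, x j ^ 2 := by
    intro x; simp [dotProduct, pow_two]
  have hqt : (∑ j, (X.mulVec b j) ^ 2) = t := by
    rw [← hdot_sq, hXb, ← hPv₂, ← hsymdot, Matrix.mulVec_mulVec, Pidem]
  rw [hqt] at hblo
  have hi2 : (n:ℝ) * (1-δ) * (∑ i, b i ^ 2) ≤ t := by
    have h := mul_le_mul_of_nonneg_left hblo hn'.le
    rw [show (n:ℝ) * (1/(n:ℝ) * t) = t from by field_simp] at h
    linarith [h]
  -- RO application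
  have hcardT : (γ0 \ γ').card ≤ S := le_trans (Finset.card_le_card (Finset.sdiff_subset)) hγ0
  have hro := hRO β₂ b (γ0 \ γ') γ' Finset.sdiff_disjoint hcardT hγ' hsupp₂ hbsupp
  rw [hscale β₂ b] at hro
  have hcross : (∑ j, X.mulVec β₂ j * X.mulVec b j) = t := by
    rw [show (∑ j, X.mulVec β₂ j * X.mulVec b j) = v₂ ⬝ᵥ X.mulVec b from rfl, hXb, ← hPv₂]
  rw [hcross] at hro
  set sA := Real.sqrt A2 with hsA
  set sa := Real.sqrt (∑ i, b i ^ 2) with hsa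
  have hsAnn : 0 ≤ sA := Real.sqrt_nonneg _
  have hsann : 0 ≤ sa := Real.sqrt_nonneg _
  have hsA2 : sA ^ 2 = A2 := Real.sq_sqrt hA2nn
  have hsa2 : sa ^ 2 = ∑ i, b i ^ 2 :=
    Real.sq_sqrt (Finset.sum_nonneg fun i _ => sq_nonneg _)
  have hi3 : t ≤ (n:ℝ) * θ * sA * sa := by
    have h1 : (1/(n:ℝ)) * t ≤ θ * sA * sa := le_trans (le_abs_self _) hro
    have h := mul_le_mul_of_nonneg_left h1 hn'.le
    rw [show (n:ℝ) * (1/(n:ℝ) * t) = t from by field_simp] at h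
    linarith [h]
  -- key scalar inequality
  have key : (1 - δ) * t ≤ (n:ℝ) * θ ^ 2 * A2 := by
    rcases eq_or_lt_of_le hsann with h0 | hpos
    · have ht0 : t ≤ 0 := by
        rw [← h0] at hi3; simpa using hi3
      have h3 : (1 - δ) * t ≤ 0 := by
        have h4 := mul_le_mul_of_nonneg_left ht0 h1δ.le
        simpa using h4
      exact le_trans h3 (mul_nonneg (mul_nonneg hn'.le (sq_nonneg θ)) hA2nn)
    · have h1 : (1 - δ) * sa ≤ θ * sA := by
        have h2 : (n:ℝ) * (1-δ) * (sa * sa) ≤ (n:ℝ) * θ * sA * sa := by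
          calc (n:ℝ) * (1-δ) * (sa * sa) = (n:ℝ) * (1-δ) * (∑ i, b i ^ 2) := by
                rw [← hsa2]; ring
            _ ≤ t := hi2
            _ ≤ _ := hi3
        have hns : 0 < (n:ℝ) * sa := mul_pos hn' hpos
        have h2' : ((n:ℝ)*sa)*((1-δ)*sa) ≤ ((n:ℝ)*sa)*(θ*sA) := by
          calc ((n:ℝ)*sa)*((1-δ)*sa) = (n:ℝ) * (1-δ) * (sa * sa) := by ring
            _ ≤ (n:ℝ) * θ * sA * sa := h2
            _ = ((n:ℝ)*sa)*(θ*sA) := by ring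
        exact le_of_mul_le_mul_left h2' hns
      have hθsA : 0 ≤ (n:ℝ) * θ * sA := by positivity
      calc (1 - δ) * t ≤ (1 - δ) * ((n:ℝ) * θ * sA * sa) :=
            mul_le_mul_of_nonneg_left hi3 h1δ.le
        _ = ((n:ℝ) * θ * sA) * ((1 - δ) * sa) := by ring
        _ ≤ ((n:ℝ) * θ * sA) * (θ * sA) := mul_le_mul_of_nonneg_left h1 hθsA
        _ = (n:ℝ) * θ ^ 2 * sA ^ 2 := by ring
        _ = (n:ℝ) * θ ^ 2 * A2 := by rw [hsA2]
  have ht_bound : t ≤ (n:ℝ) * θ ^ 2 * A2 / (1 - δ) := by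
    rw [le_div_iff₀ h1δ, mul_comm t]
    exact key
  -- expand the LHS
  have hLHS : (X.mulVec β0) ⬝ᵥ ((Pγ' - Pγ).mulVec (X.mulVec β0)) = t - N2 := by
    rw [Matrix.sub_mulVec, dotProduct_sub, hPγu]
    rw [hu, Matrix.mulVec_add, hPv₁]
    rw [show (v₁ + v₂) ⬝ᵥ (v₁ + Pγ'.mulVec v₂) =
        v₁ ⬝ᵥ v₁ + v₁ ⬝ᵥ Pγ'.mulVec v₂ + (v₂ ⬝ᵥ v₁ + v₂ ⬝ᵥ Pγ'.mulVec v₂) from by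
          simp only [add_dotProduct, dotProduct_add]; ring]
    rw [show (v₁ + v₂) ⬝ᵥ (v₁ + v₂) =
        v₁ ⬝ᵥ v₁ + v₁ ⬝ᵥ v₂ + (v₂ ⬝ᵥ v₁ + v₂ ⬝ᵥ v₂) from by
          simp only [add_dotProduct, dotProduct_add]; ring]
    rw [hsymdot v₁ v₂, hPv₁, hdot_sq v₂, ← hN2def, ← ht]
    ring
  -- sum identity
  have hA2eq : (∑ i ∈ γ0 \ γ', β0 i ^ 2) = A2 := by
    rw [hA2def]
    rw [show (∑ i, β₂ i ^ 2) = ∑ i ∈ γ0 \ γ', β₂ i ^ 2 from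
      (Finset.sum_subset (Finset.subset_univ _) (fun i _ hi => by rw [hsupp₂ i hi]; ring)).symm]
    apply Finset.sum_congr rfl
    intro i hi
    have : β₂ i = β0 i := if_pos hi
    rw [this]
  rw [hLHS, hA2eq]
  have hfinal : -(n:ℝ) * (1 - δ - θ ^ 2 / (1 - δ)) * A2 =
      (n:ℝ) * θ ^ 2 * A2 / (1 - δ) - (n:ℝ) * (1 - δ) * A2 := by
    field_simp
    ring
  rw [hfinal]
  linarith only [hi1, ht_bound]
end

section
/- Assume the restricted isometry and orthogonality hypotheses δ = δ_{2S}(X̃), θ = θ_{S,2S}(X̃), δ + θ < 1, where X̃ = X/√n, and let β⁰ be supported on γ⁰ with |γ⁰| ≤ S. Suppose the noise vector e lies in the event E = {e : ‖X̃_γᵀe‖₂² ≤ 4σ²(1+α)|γ| log p for all γ}. Then for all γ, γ′ ∈ {0,1}^p with γ⁰ ≤ γ and |γ′| ≤ 2S: |(Xβ⁰)ᵀ(P_{γ′} - P_γ)e| ≤ 2σ·((1-δ+θ)/(1-δ))·√((1+α)·max{|γ⁰∖γ′|, |γ′|}·n·log p)·‖β⁰_{γ⁰∖γ′}‖₂.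 -/
/-!
Write `β⁰ = u + v`, where `v` is `β⁰` restricted to `γ⁰ \ γ'` and `u` is supported in `γ'`.
Both projections fix `X u`, and `P_γ` fixes `X v` as `γ⁰ ⊆ γ`, so the term equals
`(X v)ᵀ P_γ' e - (X v)ᵀ e`. On the event `E` the second summand is bounded by Cauchy–Schwarz
against `‖X_{γ⁰ \ γ'}ᵀ e‖`. For the first, write `P_γ' e = X w` with `w` supported in `γ'`:
restricted orthogonality gives `|(X v)ᵀ X w| ≤ n θ ‖v‖ ‖w‖`, while the restricted isometry
property and `‖X w‖² = (X w)ᵀ e ≤ ‖X_γ'ᵀ e‖ ‖w‖` give `n (1 - δ) ‖w‖ ≤ ‖X_γ'ᵀ e‖`.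
-/

open Matrix Finset

namespace Matrix

variable {ι κ R : Type*} [Fintype κ]

lemma mulVec_eq_submatrix_mulVec [NonUnitalNonAssocSemiring R] (X : Matrix ι κ R) (t : Finset κ)
    {b : κ → R} (hb : ∀ i ∉ t, b i = 0) :
    X *ᵥ b = X.submatrix id ((↑) : t → κ) *ᵥ fun i => b i := by
  ext j
  simp only [mulVec, dotProduct, submatrix_apply, id]
  rw [sum_coe_sort t fun i => X j i * b i]
  exact (sum_subset (subset_univ t) fun i _ hi => by rw [hb i hi, mul_zero]).symm

lemma smul_mulVec_dotProduct_smul_mulVec [Fintype ι] [CommRing R] (c : R) (A : Matrix ι κ R)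
    (x y : κ → R) :
    (c • A) *ᵥ x ⬝ᵥ (c • A) *ᵥ y = c ^ 2 * (A *ᵥ x ⬝ᵥ A *ᵥ y) := by
  rw [smul_mulVec, smul_mulVec, smul_dotProduct, dotProduct_smul, smul_eq_mul, smul_eq_mul]
  ring

lemma abs_mulVec_dotProduct_le [Fintype ι] (X : Matrix ι κ ℝ) (s : Finset κ) {v : κ → ℝ}
    (hv : ∀ i ∉ s, v i = 0) (e : ι → ℝ) :
    |X *ᵥ v ⬝ᵥ e| ≤ √(∑ i ∈ s, (Xᵀ *ᵥ e) i ^ 2) * √(∑ i, v i ^ 2) := by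
  have hdot : X *ᵥ v ⬝ᵥ e = ∑ i ∈ s, (Xᵀ *ᵥ e) i * v i := by
    rw [dotProduct_comm, dotProduct_mulVec, ← mulVec_transpose, dotProduct]
    exact (sum_subset (subset_univ s) fun i _ hi => by rw [hv i hi, mul_zero]).symm
  have hnorm : ∑ i, v i ^ 2 = ∑ i ∈ s, v i ^ 2 :=
    (sum_subset (subset_univ s) fun i _ hi => by rw [hv i hi, sq, mul_zero]).symm
  rw [hdot, hnorm, ← Real.sqrt_mul' _ (sum_nonneg fun i _ => sq_nonneg (v i))]
  exact Real.abs_le_sqrt (sum_mul_sq_le_sq_mul_sq s _ _)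

variable [Fintype ι] [DecidableEq κ]

section CommRing

variable [CommRing R]

/-- The orthogonal projection onto the column span of `A`; it is junk (zero) unless
`Aᵀ * A` is invertible. -/
noncomputable def colSpanProj (A : Matrix ι κ R) : Matrix ι ι R := A * (Aᵀ * A)⁻¹ * Aᵀ

lemma colSpanProj_transpose (A : Matrix ι κ R) : (colSpanProj A)ᵀ = colSpanProj A := by
  simp only [colSpanProj, transpose_mul, transpose_transpose, transpose_nonsing_inv,
    Matrix.mul_assoc]

lemma dotProduct_colSpanProj_mulVec (A : Matrix ι κ R) (x y : ι → R) :
    x ⬝ᵥ colSpanProj A *ᵥ y = colSpanProj A *ᵥ x ⬝ᵥ y := by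
  rw [dotProduct_mulVec, ← vecMul_transpose, colSpanProj_transpose]

lemma colSpanProj_mul_self (A : Matrix ι κ R) (hA : IsUnit (Aᵀ * A).det) :
    colSpanProj A * A = A := by
  rw [colSpanProj, Matrix.mul_assoc, Matrix.mul_assoc, nonsing_inv_mul _ hA, Matrix.mul_one]

variable (X : Matrix ι κ R) (t : Finset κ)

lemma colSpanProj_submatrix_mulVec_mulVec
    (ht : IsUnit ((X.submatrix id ((↑) : t → κ))ᵀ * X.submatrix id (↑)).det)
    {b : κ → R} (hb : ∀ i ∉ t, b i = 0) :
    colSpanProj (X.submatrix id ((↑) : t → κ)) *ᵥ (X *ᵥ b) = X *ᵥ b := by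
  rw [mulVec_eq_submatrix_mulVec X t hb, mulVec_mulVec, colSpanProj_mul_self _ ht]

lemma exists_colSpanProj_submatrix_mulVec_eq (e : ι → R) :
    ∃ w : κ → R, (∀ i ∉ t, w i = 0) ∧
      colSpanProj (X.submatrix id ((↑) : t → κ)) *ᵥ e = X *ᵥ w := by
  set A := X.submatrix id ((↑) : t → κ)
  set c := ((Aᵀ * A)⁻¹ * Aᵀ) *ᵥ e
  have hw : ∀ i ∉ t, (fun i => if h : i ∈ t then c ⟨i, h⟩ else 0) i = 0 := fun i hi => dif_neg hi
  refine ⟨_, hw, ?_⟩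
  rw [mulVec_eq_submatrix_mulVec X t hw, colSpanProj, Matrix.mul_assoc, ← mulVec_mulVec]
  simp [c, A]

lemma mulVec_dotProduct_colSpanProj_sub_colSpanProj (t' : Finset κ)
    (ht : IsUnit ((X.submatrix id ((↑) : t → κ))ᵀ * X.submatrix id (↑)).det)
    (ht' : IsUnit ((X.submatrix id ((↑) : t' → κ))ᵀ * X.submatrix id (↑)).det)
    {β v : κ → R} (hβ : ∀ i ∉ t, β i = 0) (hβv : ∀ i ∉ t', (β - v) i = 0) (e : ι → R) :
    X *ᵥ β ⬝ᵥ (colSpanProj (X.submatrix id ((↑) : t' → κ)) -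
        colSpanProj (X.submatrix id ((↑) : t → κ))) *ᵥ e =
      X *ᵥ v ⬝ᵥ colSpanProj (X.submatrix id ((↑) : t' → κ)) *ᵥ e - X *ᵥ v ⬝ᵥ e := by
  have hsplit : X *ᵥ β = X *ᵥ (β - v) + X *ᵥ v := by rw [← mulVec_add, sub_add_cancel]
  rw [sub_mulVec, dotProduct_sub, dotProduct_colSpanProj_mulVec, dotProduct_colSpanProj_mulVec,
    colSpanProj_submatrix_mulVec_mulVec X t ht hβ, hsplit, mulVec_add,
    colSpanProj_submatrix_mulVec_mulVec X t' ht' hβv, add_dotProduct, add_dotProduct,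
    ← dotProduct_colSpanProj_mulVec]
  ring

end CommRing

lemma abs_mulVec_dotProduct_colSpanProj_le (X : Matrix ι κ ℝ) (t : Finset κ)
    (ht : IsUnit ((X.submatrix id ((↑) : t → κ))ᵀ * X.submatrix id (↑)).det)
    {a b : ℝ} (ha : 0 < a) (hb : 0 ≤ b) (v : κ → ℝ) (e : ι → ℝ)
    (hlow : ∀ w : κ → ℝ, (∀ i ∉ t, w i = 0) → a * ∑ i, w i ^ 2 ≤ X *ᵥ w ⬝ᵥ X *ᵥ w)
    (hcross : ∀ w : κ → ℝ, (∀ i ∉ t, w i = 0) →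
      |X *ᵥ v ⬝ᵥ X *ᵥ w| ≤ b * √(∑ i, v i ^ 2) * √(∑ i, w i ^ 2)) :
    |X *ᵥ v ⬝ᵥ colSpanProj (X.submatrix id ((↑) : t → κ)) *ᵥ e| ≤
      b / a * √(∑ i ∈ t, (Xᵀ *ᵥ e) i ^ 2) * √(∑ i, v i ^ 2) := by
  obtain ⟨w, hw, hPe⟩ := exists_colSpanProj_submatrix_mulVec_eq X t e
  set N := √(∑ i ∈ t, (Xᵀ *ᵥ e) i ^ 2)
  set W := ∑ i, w i ^ 2
  have hgram : X *ᵥ w ⬝ᵥ X *ᵥ w = X *ᵥ w ⬝ᵥ e := by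
    nth_rewrite 2 [← hPe]
    rw [dotProduct_colSpanProj_mulVec, colSpanProj_submatrix_mulVec_mulVec X t ht hw]
  have hw_le : a * √W ≤ N := by
    have h : a * W ≤ N * √W := calc
      a * W ≤ X *ᵥ w ⬝ᵥ X *ᵥ w := hlow w hw
      _ = X *ᵥ w ⬝ᵥ e := hgram
      _ ≤ N * √W := (le_abs_self _).trans (abs_mulVec_dotProduct_le X t hw e)
    rcases (Real.sqrt_nonneg W).eq_or_lt with h0 | h0
    · rw [← h0, mul_zero]; exact Real.sqrt_nonneg _
    · refine le_of_mul_le_mul_right ?_ h0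
      rwa [mul_assoc, Real.mul_self_sqrt (sum_nonneg fun i _ => sq_nonneg (w i))]
  calc |X *ᵥ v ⬝ᵥ colSpanProj (X.submatrix id ((↑) : t → κ)) *ᵥ e|
      = |X *ᵥ v ⬝ᵥ X *ᵥ w| := by rw [hPe]
    _ ≤ b * √(∑ i, v i ^ 2) * √W := hcross w hw
    _ ≤ b * √(∑ i, v i ^ 2) * (N / a) := by
        gcongr
        rw [le_div_iff₀ ha]; linarith
    _ = b / a * N * √(∑ i, v i ^ 2) := by ring

lemma abs_mulVec_dotProduct_colSpanProj_sub_le (X : Matrix ι κ ℝ) {t₀ t t' : Finset κ}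
    (ht₀ : t₀ ⊆ t) (ht : IsUnit ((X.submatrix id ((↑) : t → κ))ᵀ * X.submatrix id (↑)).det)
    (ht' : IsUnit ((X.submatrix id ((↑) : t' → κ))ᵀ * X.submatrix id (↑)).det)
    {a b R : ℝ} (ha : 0 < a) (hb : 0 ≤ b) {β : κ → ℝ} (hβ : ∀ i ∉ t₀, β i = 0) (e : ι → ℝ)
    (hlow : ∀ w : κ → ℝ, (∀ i ∉ t', w i = 0) → a * ∑ i, w i ^ 2 ≤ X *ᵥ w ⬝ᵥ X *ᵥ w)
    (hcross : ∀ v w : κ → ℝ, (∀ i ∉ t₀ \ t', v i = 0) → (∀ i ∉ t', w i = 0) →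
      |X *ᵥ v ⬝ᵥ X *ᵥ w| ≤ b * √(∑ i, v i ^ 2) * √(∑ i, w i ^ 2))
    (hnoise₀ : √(∑ i ∈ t₀ \ t', (Xᵀ *ᵥ e) i ^ 2) ≤ R) (hnoise' : √(∑ i ∈ t', (Xᵀ *ᵥ e) i ^ 2) ≤ R) :
    |X *ᵥ β ⬝ᵥ (colSpanProj (X.submatrix id ((↑) : t' → κ)) -
        colSpanProj (X.submatrix id ((↑) : t → κ))) *ᵥ e| ≤
      (1 + b / a) * R * √(∑ i ∈ t₀ \ t', β i ^ 2) := by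
  set v := (↑(t₀ \ t') : Set κ).indicator β
  have hv : ∀ i ∉ t₀ \ t', v i = 0 := fun i hi => Set.indicator_of_notMem hi β
  have hβv : ∀ i ∉ t', (β - v) i = 0 := by
    intro i hi
    by_cases hit₀ : i ∈ t₀
    · simp [v, hit₀, hi]
    · simp [v, hit₀, hβ i hit₀]
  have hvnorm : ∑ i, v i ^ 2 = ∑ i ∈ t₀ \ t', β i ^ 2 := by
    simp only [v, Set.indicator_apply, ite_pow, zero_pow two_ne_zero, coe_sdiff, ← sum_filter]
    congr 1
    ext i
    simp
  rw [mulVec_dotProduct_colSpanProj_sub_colSpanProj X t t' ht ht'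
    (fun i hi => hβ i fun h => hi (ht₀ h)) hβv, ← hvnorm]
  calc _ ≤ |X *ᵥ v ⬝ᵥ colSpanProj (X.submatrix id ((↑) : t' → κ)) *ᵥ e| + |X *ᵥ v ⬝ᵥ e| :=
        abs_sub _ _
    _ ≤ b / a * √(∑ i ∈ t', (Xᵀ *ᵥ e) i ^ 2) * √(∑ i, v i ^ 2) +
          √(∑ i ∈ t₀ \ t', (Xᵀ *ᵥ e) i ^ 2) * √(∑ i, v i ^ 2) :=
        add_le_add (abs_mulVec_dotProduct_colSpanProj_le X t' ht' ha hb v e hlow (hcross v · hv))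
          (abs_mulVec_dotProduct_le X _ hv e)
    _ ≤ b / a * R * √(∑ i, v i ^ 2) + R * √(∑ i, v i ^ 2) := by gcongr
    _ = (1 + b / a) * R * √(∑ i, v i ^ 2) := by ring

end Matrix

theorem projection_noise_term_bound_general (n p S : ℕ) (hn : 0 < n)
    (σ α δ θ : ℝ) (hσ : 0 < σ) (hα : 0 < α)
    (hθ0 : 0 ≤ θ) (hsum : δ + θ < 1)
    (X : Matrix (Fin n) (Fin p) ℝ)
    (Xt : Matrix (Fin n) (Fin p) ℝ) (hXt : Xt = (1 / Real.sqrt n) • X)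
    (hRIP : ∀ b : Fin p → ℝ, (Finset.univ.filter fun i => b i ≠ 0).card ≤ 2 * S →
      (1 - δ) * ∑ i, (b i) ^ 2 ≤ ∑ j, (Xt.mulVec b j) ^ 2 ∧
      ∑ j, (Xt.mulVec b j) ^ 2 ≤ (1 + δ) * ∑ i, (b i) ^ 2)
    (hRO : ∀ (b b' : Fin p → ℝ) (T T' : Finset (Fin p)), Disjoint T T' →
      T.card ≤ S → T'.card ≤ 2 * S →
      (∀ i ∉ T, b i = 0) → (∀ i ∉ T', b' i = 0) →
      |∑ j, Xt.mulVec b j * Xt.mulVec b' j| ≤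
        θ * Real.sqrt (∑ i, (b i) ^ 2) * Real.sqrt (∑ i, (b' i) ^ 2))
    (β0 : Fin p → ℝ) (γ0 : Finset (Fin p)) (hγ0 : γ0.card ≤ S)
    (hsupp : ∀ i ∉ γ0, β0 i = 0)
    -- the noise vector lies in the event E
    (e : Fin n → ℝ)
    (hE : ∀ γ : Finset (Fin p),
      ∑ i ∈ γ, (∑ j, Xt j i * e j) ^ 2 ≤ 4 * σ ^ 2 * (1 + α) * γ.card * Real.log p)
    (γ γ' : Finset (Fin p)) (hγγ0 : γ0 ⊆ γ) (hγ' : γ'.card ≤ 2 * S)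
    (Xγ : Matrix (Fin n) γ ℝ) (hXγ : Xγ = X.submatrix id (Subtype.val : γ → Fin p))
    (Xγ' : Matrix (Fin n) γ' ℝ) (hXγ' : Xγ' = X.submatrix id (Subtype.val : γ' → Fin p))
    (hinvγ : IsUnit (Xγᵀ * Xγ).det) (hinvγ' : IsUnit (Xγ'ᵀ * Xγ').det)
    (Pγ Pγ' : Matrix (Fin n) (Fin n) ℝ)
    (hPγ : Pγ = Xγ * (Xγᵀ * Xγ)⁻¹ * Xγᵀ)
    (hPγ' : Pγ' = Xγ' * (Xγ'ᵀ * Xγ')⁻¹ * Xγ'ᵀ) :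
    |(X.mulVec β0) ⬝ᵥ ((Pγ' - Pγ).mulVec e)| ≤
      2 * σ * ((1 - δ + θ) / (1 - δ)) *
        Real.sqrt ((1 + α) * max ((γ0 \ γ').card : ℝ) (γ'.card : ℝ) * n * Real.log p) *
        Real.sqrt (∑ i ∈ γ0 \ γ', (β0 i) ^ 2) := by
  subst hXγ hXγ' hPγ hPγ'
  have hn' : (0 : ℝ) < n := Nat.cast_pos.mpr hn
  have hδ : 0 < 1 - δ := by linarith
  have hX : X = √n • Xt := by
    rw [hXt, smul_smul, mul_one_div_cancel (Real.sqrt_pos.mpr hn').ne', one_smul]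
  have hgram (b b' : Fin p → ℝ) : X *ᵥ b ⬝ᵥ X *ᵥ b' = n * (Xt *ᵥ b ⬝ᵥ Xt *ᵥ b') := by
    rw [hX, smul_mulVec_dotProduct_smul_mulVec, Real.sq_sqrt hn'.le]
  set M : ℝ := max ((γ0 \ γ').card : ℝ) (γ'.card : ℝ)
  have hnoise (t : Finset (Fin p)) (ht : (#t : ℝ) ≤ M) :
      √(∑ i ∈ t, (Xᵀ *ᵥ e) i ^ 2) ≤ 2 * σ * √((1 + α) * M * n * Real.log p) := by
    have hlog := Real.log_natCast_nonneg p
    rw [← Real.sqrt_sq (by positivity : 0 ≤ 2 * σ), ← Real.sqrt_mul (sq_nonneg _)]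
    refine Real.sqrt_le_sqrt ?_
    calc ∑ i ∈ t, (Xᵀ *ᵥ e) i ^ 2 = n * ∑ i ∈ t, (∑ j, Xt j i * e j) ^ 2 := by
          simp only [hX, transpose_smul, smul_mulVec, Pi.smul_apply, smul_eq_mul, mul_pow,
            Real.sq_sqrt hn'.le, mul_sum]
          rfl
      _ ≤ n * (4 * σ ^ 2 * (1 + α) * t.card * Real.log p) := by gcongr; exact hE t
      _ ≤ n * (4 * σ ^ 2 * (1 + α) * M * Real.log p) := by gcongr
      _ = (2 * σ) ^ 2 * ((1 + α) * M * n * Real.log p) := by ring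
  have hlow (w : Fin p → ℝ) (hw : ∀ i ∉ γ', w i = 0) :
      n * (1 - δ) * ∑ i, w i ^ 2 ≤ X *ᵥ w ⬝ᵥ X *ᵥ w := by
    rw [hgram, mul_assoc]
    gcongr
    refine (hRIP w ((card_le_card fun i hi => ?_).trans hγ')).1.trans_eq ?_
    · exact by_contra fun h => (mem_filter.mp hi).2 (hw i h)
    · simp only [dotProduct, sq]
  have hcross (v w : Fin p → ℝ) (hv : ∀ i ∉ γ0 \ γ', v i = 0) (hw : ∀ i ∉ γ', w i = 0) :
      |X *ᵥ v ⬝ᵥ X *ᵥ w| ≤ n * θ * √(∑ i, v i ^ 2) * √(∑ i, w i ^ 2) := by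
    rw [hgram, abs_mul, abs_of_pos hn', mul_assoc (n : ℝ), mul_assoc (n : ℝ)]
    gcongr
    exact hRO v w _ γ' sdiff_disjoint ((card_le_card sdiff_subset).trans hγ0) hγ' hv hw
  calc _ ≤ (1 + n * θ / (n * (1 - δ))) * (2 * σ * √((1 + α) * M * n * Real.log p)) *
        √(∑ i ∈ γ0 \ γ', β0 i ^ 2) :=
      abs_mulVec_dotProduct_colSpanProj_sub_le X hγγ0 hinvγ hinvγ' (by positivity) (by positivity)
        hsupp e hlow hcross (hnoise _ (le_max_left _ _)) (hnoise _ (le_max_right _ _))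
    _ = _ := by
      rw [mul_div_mul_left _ _ hn'.ne']
      field_simp

theorem projection_noise_term_bound (n p S : ℕ) (hn : 0 < n) (hp : 1 < p)
    (σ α δ θ : ℝ) (hσ : 0 < σ) (hα : 0 < α)
    (hδ0 : 0 ≤ δ) (hθ0 : 0 ≤ θ) (hsum : δ + θ < 1)
    (X : Matrix (Fin n) (Fin p) ℝ)
    (Xt : Matrix (Fin n) (Fin p) ℝ) (hXt : Xt = (1 / Real.sqrt n) • X)
    (hRIP : ∀ b : Fin p → ℝ, (Finset.univ.filter fun i => b i ≠ 0).card ≤ 2 * S →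
      (1 - δ) * ∑ i, (b i) ^ 2 ≤ ∑ j, (Xt.mulVec b j) ^ 2 ∧
      ∑ j, (Xt.mulVec b j) ^ 2 ≤ (1 + δ) * ∑ i, (b i) ^ 2)
    (hRO : ∀ (b b' : Fin p → ℝ) (T T' : Finset (Fin p)), Disjoint T T' →
      T.card ≤ S → T'.card ≤ 2 * S →
      (∀ i ∉ T, b i = 0) → (∀ i ∉ T', b' i = 0) →
      |∑ j, Xt.mulVec b j * Xt.mulVec b' j| ≤
        θ * Real.sqrt (∑ i, (b i) ^ 2) * Real.sqrt (∑ i, (b' i) ^ 2))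
    (β0 : Fin p → ℝ) (γ0 : Finset (Fin p)) (hγ0 : γ0.card ≤ S)
    (hsupp : ∀ i ∉ γ0, β0 i = 0)
    -- the noise vector lies in the event E
    (e : Fin n → ℝ)
    (hE : ∀ γ : Finset (Fin p),
      ∑ i ∈ γ, (∑ j, Xt j i * e j) ^ 2 ≤ 4 * σ ^ 2 * (1 + α) * γ.card * Real.log p)
    (γ γ' : Finset (Fin p)) (hγγ0 : γ0 ⊆ γ) (hγ' : γ'.card ≤ 2 * S)
    (Xγ : Matrix (Fin n) γ ℝ) (hXγ : Xγ = X.submatrix id (Subtype.val : γ → Fin p))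
    (Xγ' : Matrix (Fin n) γ' ℝ) (hXγ' : Xγ' = X.submatrix id (Subtype.val : γ' → Fin p))
    (hinvγ : IsUnit (Xγᵀ * Xγ).det) (hinvγ' : IsUnit (Xγ'ᵀ * Xγ').det)
    (Pγ Pγ' : Matrix (Fin n) (Fin n) ℝ)
    (hPγ : Pγ = Xγ * (Xγᵀ * Xγ)⁻¹ * Xγᵀ)
    (hPγ' : Pγ' = Xγ' * (Xγ'ᵀ * Xγ')⁻¹ * Xγ'ᵀ) :
    |(X.mulVec β0) ⬝ᵥ ((Pγ' - Pγ).mulVec e)| ≤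
      2 * σ * ((1 - δ + θ) / (1 - δ)) *
        Real.sqrt ((1 + α) * max ((γ0 \ γ').card : ℝ) (γ'.card : ℝ) * n * Real.log p) *
        Real.sqrt (∑ i ∈ γ0 \ γ', (β0 i) ^ 2) :=
  projection_noise_term_bound_general n p S hn σ α δ θ hσ hα hθ0 hsum X Xt hXt hRIP hRO β0 γ0 hγ0
    hsupp e hE γ γ' hγγ0 hγ' Xγ hXγ Xγ' hXγ' hinvγ hinvγ' Pγ Pγ' hPγ hPγ'
end

section
/- Let y ∈ ℝⁿ, β⁰, β ∈ ℝᵖ, X an n×p real matrix, and suppose ‖Xᵀ(y - Xβ⁰)‖_{ℓ_v} ≤ κ. Then for conjugate exponents 1/u + 1/v = 1 (u ≥ 1), ‖y - Xβ‖₂² - ‖y - Xβ⁰‖₂² ≤ 2κ‖β - β⁰‖_{ℓ_u} + ‖XᵀX‖_{ℓ_u→ℓ_v}·‖β - β⁰‖_{ℓ_u}², where ‖A‖_{ℓ_u→ℓ_v} = max_{‖x‖_{ℓ_u}=1}‖Ax‖_{ℓ_v}. -/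
/-!
Write `r = y - Xβ⁰` and `δ = β - β⁰`. Since `y - Xβ = r - Xδ`, the difference of squared
residuals is `-2 ⟨Xᵀr, δ⟩ + ⟨XᵀXδ, δ⟩`, and Hölder's inequality bounds the two inner products by
`κ ‖δ‖_u` and `‖XᵀXδ‖_v ‖δ‖_u ≤ N ‖δ‖_u²`.
-/

open Matrix

noncomputable def ellNorm {ι : Type*} [Fintype ι] (r : ℝ) (x : ι → ℝ) : ℝ :=
  (∑ i, |x i| ^ r) ^ (1 / r)

section ellNorm

variable {ι : Type*} [Fintype ι]

lemma ellNorm_nonneg (r : ℝ) (x : ι → ℝ) : 0 ≤ ellNorm r x := by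
  unfold ellNorm; positivity

@[simp]
lemma ellNorm_neg (r : ℝ) (x : ι → ℝ) : ellNorm r (-x) = ellNorm r x := by
  simp [ellNorm]

-- `x ^ 0 = 1` for every real `x`, including `0`.
lemma ellNorm_zero_exponent (x : ι → ℝ) : ellNorm 0 x = 1 := by
  simp [ellNorm]

lemma ellNorm_zero {r : ℝ} (hr : r ≠ 0) : ellNorm r (0 : ι → ℝ) = 0 := by
  simp [ellNorm, Real.zero_rpow hr, Real.zero_rpow (inv_ne_zero hr)]

lemma dotProduct_le_ellNorm_mul_ellNorm {u v : ℝ} (huv : u.HolderConjugate v) (a b : ι → ℝ) :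
    a ⬝ᵥ b ≤ ellNorm v a * ellNorm u b :=
  Real.inner_le_Lp_mul_Lq Finset.univ a b huv.symm

end ellNorm

/-- With `u = 1` the relation `1 / u + 1 / v = 1` forces the junk exponent `v = 0`, for which
`ellNorm v` is identically `1`; a linear bound `ellNorm v (f x) ≤ N * ellNorm u x` then fails
at `x = 0`. -/
lemma Real.HolderConjugate.of_ellNorm_le {ι κ : Type*} [Fintype ι] [Fintype κ] {u v N : ℝ}
    (hu : 1 ≤ u) (huv : 1 / u + 1 / v = 1) (f : (ι → ℝ) → κ → ℝ)
    (hf : ∀ x, ellNorm v (f x) ≤ N * ellNorm u x) : u.HolderConjugate v := by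
  rcases hu.eq_or_lt with rfl | hu
  · have hv : v = 0 := by simpa using huv
    have h := hf 0
    rw [hv, ellNorm_zero_exponent, ellNorm_zero one_ne_zero, mul_zero] at h
    exact absurd h (by norm_num)
  · exact Real.holderConjugate_iff.mpr ⟨hu, by simpa only [one_div] using huv⟩

lemma sum_sq_residual_sub_sum_sq_residual {m n R : Type*} [Fintype m] [Fintype n] [CommRing R]
    (X : Matrix m n R) (y : m → R) (β0 β : n → R) :
    ∑ j, (y j - (X *ᵥ β) j) ^ 2 - ∑ j, (y j - (X *ᵥ β0) j) ^ 2 =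
      -(2 * (Xᵀ *ᵥ (y - X *ᵥ β0)) ⬝ᵥ (β - β0)) + ((Xᵀ * X) *ᵥ (β - β0)) ⬝ᵥ (β - β0) := by
  set r := y - X *ᵥ β0
  set δ := β - β0
  have hres : ∀ j, y j - (X *ᵥ β) j = r j - (X *ᵥ δ) j := by
    simp [r, δ, mulVec_sub]
  have hexpand : ∑ j, (y j - (X *ᵥ β) j) ^ 2 - ∑ j, r j ^ 2 =
      -(2 * r ⬝ᵥ (X *ᵥ δ)) + (X *ᵥ δ) ⬝ᵥ (X *ᵥ δ) := by
    simp only [hres, dotProduct, Finset.mul_sum, ← Finset.sum_neg_distrib,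
      ← Finset.sum_sub_distrib, ← Finset.sum_add_distrib]
    exact Finset.sum_congr rfl fun j _ ↦ by ring
  rw [← mulVec_mulVec, mulVec_transpose, mulVec_transpose, ← dotProduct_mulVec,
    ← dotProduct_mulVec, ← hexpand]
  rfl

theorem likelihood_ratio_deterministic_bound_general (n p : ℕ)
    (X : Matrix (Fin n) (Fin p) ℝ) (y : Fin n → ℝ) (β0 β : Fin p → ℝ)
    (u v κ N : ℝ) (hu : 1 ≤ u) (huv : 1 / u + 1 / v = 1)
    -- ℓ_v bound on Xᵀ(y - Xβ⁰)
    (hκ : (∑ i, |Xᵀ.mulVec (y - X.mulVec β0) i| ^ v) ^ (1 / v) ≤ κ)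
    -- N bounds the ℓ_u → ℓ_v operator norm of XᵀX
    (hN : ∀ x : Fin p → ℝ,
      (∑ i, |(Xᵀ * X).mulVec x i| ^ v) ^ (1 / v) ≤ N * (∑ i, |x i| ^ u) ^ (1 / u)) :
    ∑ j, (y j - X.mulVec β j) ^ 2 - ∑ j, (y j - X.mulVec β0 j) ^ 2 ≤
      2 * κ * (∑ i, |β i - β0 i| ^ u) ^ (1 / u) +
        N * ((∑ i, |β i - β0 i| ^ u) ^ (1 / u)) ^ 2 := by
  change _ ≤ 2 * κ * ellNorm u (β - β0) + N * ellNorm u (β - β0) ^ 2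
  have huv' : u.HolderConjugate v := .of_ellNorm_le hu huv _ hN
  set δ := β - β0
  set g := Xᵀ *ᵥ (y - X *ᵥ β0)
  have hlinear : -(g ⬝ᵥ δ) ≤ κ * ellNorm u δ := by
    rw [← neg_dotProduct]
    calc (-g) ⬝ᵥ δ ≤ ellNorm v g * ellNorm u δ := by
          simpa using dotProduct_le_ellNorm_mul_ellNorm huv' (-g) δ
      _ ≤ κ * ellNorm u δ := mul_le_mul_of_nonneg_right hκ (ellNorm_nonneg u δ)
  have hquadratic : ((Xᵀ * X) *ᵥ δ) ⬝ᵥ δ ≤ N * ellNorm u δ ^ 2 :=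
    calc ((Xᵀ * X) *ᵥ δ) ⬝ᵥ δ ≤ ellNorm v ((Xᵀ * X) *ᵥ δ) * ellNorm u δ :=
          dotProduct_le_ellNorm_mul_ellNorm huv' _ δ
      _ ≤ N * ellNorm u δ * ellNorm u δ :=
          mul_le_mul_of_nonneg_right (hN δ) (ellNorm_nonneg u δ)
      _ = N * ellNorm u δ ^ 2 := by ring
  rw [sum_sq_residual_sub_sum_sq_residual]
  linarith

theorem likelihood_ratio_deterministic_bound (n p : ℕ)
    (X : Matrix (Fin n) (Fin p) ℝ) (y : Fin n → ℝ) (β0 β : Fin p → ℝ)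
    (u v κ N : ℝ) (hu : 1 ≤ u) (huv : 1 / u + 1 / v = 1)
    (hκ0 : 0 ≤ κ)
    -- ℓ_v bound on Xᵀ(y - Xβ⁰)
    (hκ : (∑ i, |Xᵀ.mulVec (y - X.mulVec β0) i| ^ v) ^ (1 / v) ≤ κ)
    -- N bounds the ℓ_u → ℓ_v operator norm of XᵀX
    (hN : ∀ x : Fin p → ℝ,
      (∑ i, |(Xᵀ * X).mulVec x i| ^ v) ^ (1 / v) ≤ N * (∑ i, |x i| ^ u) ^ (1 / u)) :
    ∑ j, (y j - X.mulVec β j) ^ 2 - ∑ j, (y j - X.mulVec β0 j) ^ 2 ≤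
      2 * κ * (∑ i, |β i - β0 i| ^ u) ^ (1 / u) +
        N * ((∑ i, |β i - β0 i| ^ u) ^ (1 / u)) ^ 2 :=
  likelihood_ratio_deterministic_bound_general n p X y β0 β u v κ N hu huv hκ hN
end

section
/- (Dantzig selector error bound, deterministic part) Let X̃ be an n×p matrix with δ = δ_{2S}(X̃), θ = θ_{S,2S}(X̃), δ + θ < 1. Let β ∈ ℝᵖ, let T₀ be the index set of the S largest-magnitude entries of β, and suppose β̃ is a minimizer of ‖b‖₁ subject to ‖X̃ᵀ(y - X̃b)‖_∞ ≤ λσ where y = X̃β + e and ‖X̃ᵀe‖_∞ ≤ λσ. Then, with h = β̃ - β, ‖h‖₂ ≤ (4√2/(1-δ-θ))·S^{1/2}·λσ + 2·((1-δ+θ)/(1-δ-θ))·S^{-1/2}·‖β_{T₀ᶜ}‖₁. -/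
/-!
Write `h = β̃ - β`. Both `β` and `β̃` satisfy the Dantzig constraint, so `‖X̃ᵀX̃h‖_∞ ≤ 2λσ`, and
`‖β̃‖₁ ≤ ‖β‖₁` gives the cone condition `‖h_{T₀ᶜ}‖₁ ≤ ‖h_{T₀}‖₁ + 2‖β_{T₀ᶜ}‖₁`. List `T₀ᶜ` by
decreasing `|hᵢ|` and cut it into consecutive blocks `T₁, T₂, …` of size `S`; put `W = T₀ ∪ T₁`.
Every entry of `T_{k+1}` is at most the mean of `|h|` on `T_k`, so
`K := ∑_{k≥2} ‖h_{T_k}‖₂ ≤ ‖h_{T₀ᶜ}‖₁ / √S`, and `‖h‖₂ ≤ ‖h_W‖₂ + K`. Expanding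
`‖X̃h_W‖² = ⟨X̃h, X̃h_W⟩ - ∑_{k≥2} ⟨X̃h_{T_k}, X̃h_W⟩` and using the restricted isometry and
restricted orthogonality constants on each piece gives
`(1 - δ)‖h_W‖₂ ≤ 2λσ √(2S) + θK`; the bound follows by elementary algebra.
-/

open Matrix Finset

section Sums

variable {ι : Type*}

theorem sum_abs_le_sqrt_mul_sqrt_sum_sq_of_subset (h : ι → ℝ) {T W : Finset ι} (hTW : T ⊆ W)
    {k : ℝ} (hk : (T.card : ℝ) ≤ k) :
    ∑ i ∈ T, |h i| ≤ √k * √(∑ i ∈ W, h i ^ 2) := by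
  have hcs : (∑ i ∈ T, |h i|) ^ 2 ≤ T.card * ∑ i ∈ T, h i ^ 2 := by
    simpa using sq_sum_le_card_mul_sum_sq (s := T) (f := fun i => |h i|)
  calc ∑ i ∈ T, |h i| ≤ √(T.card * ∑ i ∈ T, h i ^ 2) :=
        Real.le_sqrt_of_sq_le hcs
    _ ≤ √k * √(∑ i ∈ W, h i ^ 2) := by
        have hk0 : 0 ≤ k := (Nat.cast_nonneg _).trans hk
        rw [← Real.sqrt_mul hk0]
        gcongr

theorem sqrt_sum_sq_mul_sqrt_le_sum_abs (h : ι → ℝ) {A B : Finset ι} {S : ℕ} (hA : A.card ≤ S)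
    (hB : S ≤ B.card) (hAB : ∀ i ∈ A, ∀ j ∈ B, |h i| ≤ |h j|) :
    √(∑ i ∈ A, h i ^ 2) * √S ≤ ∑ j ∈ B, |h j| := by
  rw [← Real.sqrt_mul (sum_nonneg fun i _ => sq_nonneg _),
    Real.sqrt_le_left (sum_nonneg fun j _ => abs_nonneg _)]
  have hpoint : ∀ i ∈ A, (B.card : ℝ) ^ 2 * h i ^ 2 ≤ (∑ j ∈ B, |h j|) ^ 2 := by
    intro i hi
    rw [← sq_abs (h i), ← mul_pow]
    have : B.card * |h i| ≤ ∑ j ∈ B, |h j| := by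
      simpa using card_nsmul_le_sum B (fun j => |h j|) _ (hAB i hi)
    gcongr
  have hsum : (B.card : ℝ) ^ 2 * ∑ i ∈ A, h i ^ 2 ≤ A.card * (∑ j ∈ B, |h j|) ^ 2 := by
    simpa [mul_sum] using sum_le_sum hpoint
  have hA' : (A.card : ℝ) ≤ S := by exact_mod_cast hA
  have hB' : (S : ℝ) ≤ B.card := by exact_mod_cast hB
  rcases (Nat.zero_le S).eq_or_lt with hS | hS
  · simp only [← hS, Nat.cast_zero, mul_zero]; positivity
  have hS' : (0 : ℝ) < S := by exact_mod_cast hS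
  refine le_of_mul_le_mul_left ?_ hS'
  calc (S : ℝ) * ((∑ i ∈ A, h i ^ 2) * S) = (S : ℝ) ^ 2 * ∑ i ∈ A, h i ^ 2 := by ring
    _ ≤ (B.card : ℝ) ^ 2 * ∑ i ∈ A, h i ^ 2 := by gcongr
    _ ≤ A.card * (∑ j ∈ B, |h j|) ^ 2 := hsum
    _ ≤ S * (∑ j ∈ B, |h j|) ^ 2 := by gcongr

variable [Fintype ι]

theorem sum_comp_indicator (f : ℝ → ℝ) (hf : f 0 = 0) (T : Finset ι) (h : ι → ℝ) :
    ∑ i, f ((T : Set ι).indicator h i) = ∑ i ∈ T, f (h i) := by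
  rw [← sum_indicator_subset _ (subset_univ T)]
  exact sum_congr rfl fun i _ => (congrFun (Set.indicator_comp_of_zero hf) i).symm

theorem sqrt_sum_sq_add_le (a b : ι → ℝ) :
    √(∑ i, (a i + b i) ^ 2) ≤ √(∑ i, a i ^ 2) + √(∑ i, b i ^ 2) := by
  simpa [EuclideanSpace.norm_eq] using
    norm_add_le (WithLp.toLp 2 a : EuclideanSpace ℝ ι) (WithLp.toLp 2 b)

theorem sum_compl_abs_sub_le [DecidableEq ι] (T : Finset ι) (β b : ι → ℝ)
    (hb : ∑ i, |b i| ≤ ∑ i, |β i|) :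
    ∑ i ∈ Tᶜ, |b i - β i| ≤ ∑ i ∈ T, |b i - β i| + 2 * ∑ i ∈ Tᶜ, |β i| := by
  have hT : ∑ i ∈ T, (|β i| - |b i - β i|) ≤ ∑ i ∈ T, |b i| :=
    sum_le_sum fun i _ => by linarith [sub_sub_cancel (b i) (β i) ▸ abs_sub (b i) (b i - β i)]
  have hTc : ∑ i ∈ Tᶜ, (|b i - β i| - |β i|) ≤ ∑ i ∈ Tᶜ, |b i| :=
    sum_le_sum fun i _ => by linarith [abs_sub (b i) (β i)]
  rw [sum_sub_distrib] at hT hTc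
  linarith [sum_compl_add_sum T fun i => |b i|, sum_compl_add_sum T fun i => |β i|]

end Sums

section Blocks

variable {ι : Type*} [DecidableEq ι] {S : ℕ}

theorem List.disjoint_toFinset_take_drop {l : List ι} (hl : l.Nodup) (S : ℕ) :
    _root_.Disjoint (l.take S).toFinset (l.drop S).toFinset :=
  List.disjoint_toFinset_iff_disjoint.2 (List.disjoint_take_drop hl le_rfl)

theorem List.toFinset_take_union_drop (l : List ι) (S : ℕ) :
    (l.take S).toFinset ∪ (l.drop S).toFinset = l.toFinset := by
  rw [← List.toFinset_append, List.take_append_drop]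

theorem Finset.exists_nodup_pairwise_antitone (s : Finset ι) (u : ι → ℝ) :
    ∃ l : List ι, l.Nodup ∧ l.toFinset = s ∧ l.Pairwise fun i j => u j ≤ u i := by
  let l := s.toList.mergeSort fun i j => decide (u j ≤ u i)
  have hperm : l.Perm s.toList := List.mergeSort_perm _ _
  refine ⟨l, hperm.nodup_iff.2 s.nodup_toList, ?_, ?_⟩
  · ext i; simp [l]
  · simpa using List.pairwise_mergeSort (le := fun i j => decide (u j ≤ u i))
      (fun a b c hab hbc => by simp only [decide_eq_true_eq] at *; linarith)
      (fun a b => by simpa using le_total (u b) (u a)) s.toList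

/-- `∑ₖ ‖h_{Bₖ}‖₂` over the consecutive length-`S` blocks `Bₖ` of `l`. For `S > 0`,
`xs.drop (S - 1)` is `l.drop S`; this form makes the recursion terminate for every `S`. -/
noncomputable def blockNormSum (h : ι → ℝ) (S : ℕ) : List ι → ℝ
  | [] => 0
  | l@(_ :: xs) => √(∑ i ∈ (l.take S).toFinset, h i ^ 2) + blockNormSum h S (xs.drop (S - 1))
termination_by l => l.length
decreasing_by simp only [List.length_drop, List.length_cons]; omega

theorem blockNormSum_eq (h : ι → ℝ) (hS : 0 < S) (l : List ι) :
    blockNormSum h S l =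
      √(∑ i ∈ (l.take S).toFinset, h i ^ 2) + blockNormSum h S (l.drop S) := by
  obtain ⟨S, rfl⟩ := Nat.exists_eq_add_of_lt hS
  cases l with
  | nil => simp [blockNormSum]
  | cons x xs => rw [blockNormSum]; simp

theorem le_mul_blockNormSum (h : ι → ℝ) (F : (ι → ℝ) → ℝ)
    (hF_add : ∀ a b, F (a + b) ≤ F a + F b) {C : ℝ} (hS : 0 < S) (l : List ι) (hl : l.Nodup)
    (hF : ∀ T ⊆ l.toFinset, T.card ≤ S →
      F ((T : Set ι).indicator h) ≤ C * √(∑ i ∈ T, h i ^ 2)) :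
    F ((l.toFinset : Set ι).indicator h) ≤ C * blockNormSum h S l := by
  rcases eq_or_ne l [] with rfl | hne
  · simpa [blockNormSum] using hF ∅ (empty_subset _) (by simp)
  have hdrop := le_mul_blockNormSum h F hF_add hS (l.drop S) (hl.sublist (l.drop_sublist S))
    fun T hT hTS => hF T (hT.trans (List.toFinset_take_union_drop l S ▸ subset_union_right)) hTS
  have htake := hF _ (List.toFinset_take_union_drop l S ▸ subset_union_left)
    ((List.toFinset_card_le _).trans (List.length_take_le S l))
  rw [blockNormSum_eq h hS, ← List.toFinset_take_union_drop l S, coe_union,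
    Set.indicator_union_of_disjoint (disjoint_coe.2 (List.disjoint_toFinset_take_drop hl S))]
  calc F _ ≤ _ + _ := hF_add _ _
    _ ≤ _ := by rw [mul_add]; exact add_le_add htake hdrop
termination_by l.length
decreasing_by
  simp only [List.length_drop]
  have := List.length_pos_iff.2 hne
  omega

theorem blockNormSum_drop_mul_sqrt_le (h : ι → ℝ) (hS : 0 < S) (l : List ι) (hl : l.Nodup)
    (hsort : l.Pairwise fun i j => |h j| ≤ |h i|) :
    blockNormSum h S (l.drop S) * √S ≤ ∑ i ∈ l.toFinset, |h i| := by
  rcases le_or_gt l.length S with hlen | hlen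
  · rw [List.drop_eq_nil_of_le hlen, blockNormSum, zero_mul]
    exact sum_nonneg fun i _ => abs_nonneg _
  have htail := blockNormSum_drop_mul_sqrt_le h hS (l.drop S) (hl.sublist (l.drop_sublist S))
    (hsort.sublist (l.drop_sublist S))
  have hhead : √(∑ i ∈ ((l.drop S).take S).toFinset, h i ^ 2) * √S ≤
      ∑ j ∈ (l.take S).toFinset, |h j| := by
    refine sqrt_sum_sq_mul_sqrt_le_sum_abs h
      ((List.toFinset_card_le _).trans (List.length_take_le S _)) ?_ fun i hi j hj => ?_
    · rw [List.toFinset_card_of_nodup (hl.sublist (l.take_sublist S)), List.length_take]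
      omega
    · rw [← List.take_append_drop S l] at hsort
      exact List.pairwise_append.1 hsort |>.2.2 j (List.mem_toFinset.1 hj) i
        (List.mem_of_mem_take (List.mem_toFinset.1 hi))
  rw [blockNormSum_eq h hS, add_mul, ← List.toFinset_take_union_drop l S,
    sum_union (List.disjoint_toFinset_take_drop hl S)]
  exact add_le_add hhead htail
termination_by l.length
decreasing_by simp only [List.length_drop]; omega

variable [Fintype ι]

/-- `W = T ∪ T₁` and `l` lists `T₂ ∪ T₃ ∪ …`, where `T₁, T₂, …` are the consecutive length-`S`
blocks of `Tᶜ` sorted by decreasing `|h|`. -/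
theorem exists_superset_blockNormSum_compl_le (h : ι → ℝ) (hS : 0 < S) (T : Finset ι) :
    ∃ (W : Finset ι) (l : List ι), T ⊆ W ∧ W.card ≤ T.card + S ∧ l.Nodup ∧ l.toFinset = Wᶜ ∧
      blockNormSum h S l * √S ≤ ∑ i ∈ Tᶜ, |h i| := by
  obtain ⟨L, hL, hLT, hsort⟩ := Tᶜ.exists_nodup_pairwise_antitone fun i => |h i|
  refine ⟨T ∪ (L.take S).toFinset, L.drop S, subset_union_left, ?_,
    hL.sublist (L.drop_sublist S), ?_, hLT ▸ blockNormSum_drop_mul_sqrt_le h hS L hL hsort⟩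
  · grw [card_union_le, List.toFinset_card_le, List.length_take_le]
  · have hdisj := List.disjoint_toFinset_take_drop hL S
    ext i
    have hi : i ∈ (L.take S).toFinset ∨ i ∈ (L.drop S).toFinset ↔ i ∉ T := by
      rw [← mem_union, List.toFinset_take_union_drop, hLT, mem_compl]
    have : i ∈ (L.take S).toFinset → i ∉ (L.drop S).toFinset :=
      fun hi => disjoint_left.1 hdisj hi
    simp only [mem_compl, mem_union, not_or]
    tauto

theorem sqrt_sum_sq_le_add_blockNormSum (h : ι → ℝ) (hS : 0 < S) {W : Finset ι} {l : List ι}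
    (hl : l.Nodup) (hlW : l.toFinset = Wᶜ) :
    √(∑ i, h i ^ 2) ≤ √(∑ i ∈ W, h i ^ 2) + blockNormSum h S l := by
  have htail := le_mul_blockNormSum h (fun v => √(∑ i, v i ^ 2)) sqrt_sum_sq_add_le (C := 1)
    hS l hl fun T _ _ => by rw [one_mul, sum_comp_indicator (· ^ 2) (zero_pow two_ne_zero) T h]
  rw [hlW, one_mul] at htail
  have hsplit : ∀ i, (W : Set ι).indicator h i + (↑Wᶜ : Set ι).indicator h i = h i := fun i => by
    rw [coe_compl]; exact congrFun (Set.indicator_self_add_compl _ h) i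
  have := sqrt_sum_sq_add_le ((W : Set ι).indicator h) ((↑Wᶜ : Set ι).indicator h)
  simp only [hsplit, sum_comp_indicator (· ^ 2) (zero_pow two_ne_zero) W h] at this
  linarith

end Blocks

section Matrices

variable {ι m : Type*} [Fintype ι] [Fintype m]

/-- `θ` bounds the restricted orthogonality constant `θ_{k,k'}` of `X`. -/
def RestrictedOrthogonality (X : Matrix m ι ℝ) (k k' : ℕ) (θ : ℝ) : Prop :=
  ∀ (b b' : ι → ℝ) (T T' : Finset ι), Disjoint T T' → T.card ≤ k → T'.card ≤ k' →
    (∀ i ∉ T, b i = 0) → (∀ i ∉ T', b' i = 0) →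
    |(X *ᵥ b) ⬝ᵥ (X *ᵥ b')| ≤ θ * √(∑ i, b i ^ 2) * √(∑ i, b' i ^ 2)

theorem abs_transpose_mulVec_mulVec_sub_le (X : Matrix m ι ℝ) (y : m → ℝ) (b b' : ι → ℝ)
    {ε : ℝ} (hb : ∀ i, |(Xᵀ *ᵥ (y - X *ᵥ b)) i| ≤ ε)
    (hb' : ∀ i, |(Xᵀ *ᵥ (y - X *ᵥ b')) i| ≤ ε) (i : ι) :
    |(Xᵀ *ᵥ (X *ᵥ (b - b'))) i| ≤ 2 * ε := by
  have : X *ᵥ (b - b') = (y - X *ᵥ b') - (y - X *ᵥ b) := by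
    rw [mulVec_sub]; abel
  rw [this, mulVec_sub, Pi.sub_apply]
  linarith [abs_sub _ _ |>.trans (add_le_add (hb' i) (hb i))]

theorem dotProduct_mulVec_mulVec_le (X : Matrix m ι ℝ) (h w : ι → ℝ) {ε : ℝ}
    (hε : ∀ i, |(Xᵀ *ᵥ (X *ᵥ h)) i| ≤ ε) :
    (X *ᵥ h) ⬝ᵥ (X *ᵥ w) ≤ ε * ∑ i, |w i| := by
  rw [dotProduct_mulVec, ← mulVec_transpose, mul_sum]
  refine sum_le_sum fun i _ => ?_
  calc _ ≤ |(Xᵀ *ᵥ (X *ᵥ h)) i| * |w i| := (le_abs_self _).trans (abs_mul _ _).le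
    _ ≤ ε * |w i| := by gcongr; exact hε i

variable [DecidableEq ι]

theorem abs_dotProduct_mulVec_indicator_compl_le (X : Matrix m ι ℝ) (h : ι → ℝ) {S k : ℕ}
    {θ : ℝ} (hX : RestrictedOrthogonality X S k θ) (hS : 0 < S) {W : Finset ι} {l : List ι}
    (hW : W.card ≤ k) (hl : l.Nodup) (hlW : l.toFinset = Wᶜ) :
    |(X *ᵥ (↑Wᶜ : Set ι).indicator h) ⬝ᵥ (X *ᵥ (W : Set ι).indicator h)| ≤
      θ * √(∑ i ∈ W, h i ^ 2) * blockNormSum h S l := by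
  rw [← hlW]
  refine le_mul_blockNormSum h (fun v => |(X *ᵥ v) ⬝ᵥ (X *ᵥ (W : Set ι).indicator h)|)
    (fun a b => ?_) hS l hl fun T hT hTS => ?_
  · simpa only [mulVec_add, add_dotProduct] using abs_add_le _ _
  · have := hX _ _ T W (disjoint_left.2 fun i hiT hiW => mem_compl.1 (hlW ▸ hT hiT) hiW) hTS hW
      (fun i hi => Set.indicator_of_notMem hi h) (fun i hi => Set.indicator_of_notMem hi h)
    rw [sum_comp_indicator (· ^ 2) (zero_pow two_ne_zero),
      sum_comp_indicator (· ^ 2) (zero_pow two_ne_zero)] at this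
    exact this.trans_eq (by ring)

theorem one_sub_mul_sum_sq_le_of_abs_transpose_mulVec_le (X : Matrix m ι ℝ) (h : ι → ℝ)
    {W : Finset ι} {k : ℕ} {δ ε c : ℝ} (hW : W.card ≤ k)
    (hRIP : ∀ b : ι → ℝ, (univ.filter fun i => b i ≠ 0).card ≤ k →
      (1 - δ) * ∑ i, b i ^ 2 ≤ ∑ j, (X *ᵥ b) j ^ 2)
    (hcorr : ∀ i, |(Xᵀ *ᵥ (X *ᵥ h)) i| ≤ ε)
    (hcross : |(X *ᵥ (↑Wᶜ : Set ι).indicator h) ⬝ᵥ (X *ᵥ (W : Set ι).indicator h)| ≤ c) :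
    (1 - δ) * ∑ i ∈ W, h i ^ 2 ≤ ε * ∑ i ∈ W, |h i| + c := by
  have hsparse : (univ.filter fun i => (W : Set ι).indicator h i ≠ 0).card ≤ k :=
    (card_le_card fun i hi => by
      by_contra hiW; exact (mem_filter.1 hi).2 (Set.indicator_of_notMem hiW h)).trans hW
  have hw := hRIP _ hsparse
  rw [sum_comp_indicator (· ^ 2) (zero_pow two_ne_zero)] at hw
  set w := (W : Set ι).indicator h
  set z := (↑Wᶜ : Set ι).indicator h
  have hwz : X *ᵥ w = X *ᵥ h - X *ᵥ z := by
    rw [← mulVec_sub, ← Set.indicator_self_add_compl (↑W) h, ← coe_compl, add_sub_cancel_right]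
  have hmain : (X *ᵥ h) ⬝ᵥ (X *ᵥ w) ≤ ε * ∑ i ∈ W, |h i| := by
    simpa only [w, sum_comp_indicator _ abs_zero W h] using dotProduct_mulVec_mulVec_le X h w hcorr
  calc (1 - δ) * ∑ i ∈ W, h i ^ 2 ≤ (X *ᵥ w) ⬝ᵥ (X *ᵥ w) := by
        simpa [dotProduct, sq] using hw
    _ = (X *ᵥ h) ⬝ᵥ (X *ᵥ w) - (X *ᵥ z) ⬝ᵥ (X *ᵥ w) := by
        rw [← sub_dotProduct, ← hwz]
    _ ≤ ε * ∑ i ∈ W, |h i| + c := by linarith [neg_abs_le ((X *ᵥ z) ⬝ᵥ (X *ᵥ w))]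

end Matrices

theorem dantzig_bound_of_estimates {δ θ ε S A K E H : ℝ} (hθ : 0 ≤ θ) (hδθ : δ + θ < 1)
    (hε : 0 ≤ ε) (hS : 0 < S) (hA : 0 ≤ A) (hE : 0 ≤ E)
    (henergy : (1 - δ) * A ^ 2 ≤ 2 * ε * (√(2 * S) * A) + θ * A * K)
    (hK : K * √S ≤ √S * A + 2 * E) (hH : H ≤ A + K) :
    H ≤ 4 * √2 / (1 - δ - θ) * √S * ε + 2 * ((1 - δ + θ) / (1 - δ - θ)) * (√S)⁻¹ * E := by
  rw [Real.sqrt_mul zero_le_two] at henergy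
  set s := √S
  have hs : 0 < s := Real.sqrt_pos.2 hS
  have hc : 0 < 1 - δ - θ := by linarith
  have hKA : K ≤ A + 2 * E / s := by
    rw [← sub_le_iff_le_add', le_div_iff₀ hs]; linarith
  have hcA : (1 - δ - θ) * A ≤ 2 * √2 * s * ε + 2 * θ * E / s := by
    rcases hA.eq_or_lt with rfl | hApos
    · simp only [mul_zero]; positivity
    have h1 : (1 - δ) * A ≤ 2 * √2 * s * ε + θ * K :=
      le_of_mul_le_mul_right (by nlinarith) hApos
    have h2 : θ * K ≤ θ * A + 2 * θ * E / s := by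
      calc θ * K ≤ θ * (A + 2 * E / s) := mul_le_mul_of_nonneg_left hKA hθ
        _ = θ * A + 2 * θ * E / s := by ring
    linarith
  have hA' : A ≤ (2 * √2 * s * ε + 2 * θ * E / s) / (1 - δ - θ) := by
    rw [le_div_iff₀ hc]; linarith
  calc H ≤ 2 * A + 2 * E / s := by linarith
    _ ≤ 2 * ((2 * √2 * s * ε + 2 * θ * E / s) / (1 - δ - θ)) + 2 * E / s := by linarith
    _ = _ := by field_simp; ring

theorem dantzig_selector_error_bound_general (n p S : ℕ) (hS : 0 < S)
    (δ θ lam σ : ℝ) (hθ0 : 0 ≤ θ) (hsum : δ + θ < 1)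
    (hlam : 0 < lam) (hσ : 0 < σ)
    (Xt : Matrix (Fin n) (Fin p) ℝ)
    (hRIP : ∀ b : Fin p → ℝ, (Finset.univ.filter fun i => b i ≠ 0).card ≤ 2 * S →
      (1 - δ) * ∑ i, (b i) ^ 2 ≤ ∑ j, (Xt.mulVec b j) ^ 2 ∧
      ∑ j, (Xt.mulVec b j) ^ 2 ≤ (1 + δ) * ∑ i, (b i) ^ 2)
    (hRO : ∀ (b b' : Fin p → ℝ) (T T' : Finset (Fin p)), Disjoint T T' →
      T.card ≤ S → T'.card ≤ 2 * S →
      (∀ i ∉ T, b i = 0) → (∀ i ∉ T', b' i = 0) →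
      |∑ j, Xt.mulVec b j * Xt.mulVec b' j| ≤
        θ * Real.sqrt (∑ i, (b i) ^ 2) * Real.sqrt (∑ i, (b' i) ^ 2))
    (β : Fin p → ℝ) (y : Fin n → ℝ) (eN : Fin n → ℝ)
    (hy : y = Xt.mulVec β + eN)
    (hnoise : ∀ i, |Xtᵀ.mulVec eN i| ≤ lam * σ)
    (T0 : Finset (Fin p)) (hT0card : T0.card = S)
    -- β̃ minimizes the ℓ₁ norm subject to the Dantzig constraint
    (βt : Fin p → ℝ)
    (hfeas : ∀ i, |Xtᵀ.mulVec (y - Xt.mulVec βt) i| ≤ lam * σ)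
    (hmin : ∀ b : Fin p → ℝ, (∀ i, |Xtᵀ.mulVec (y - Xt.mulVec b) i| ≤ lam * σ) →
      ∑ i, |βt i| ≤ ∑ i, |b i|) :
    Real.sqrt (∑ i, (βt i - β i) ^ 2) ≤
      (4 * Real.sqrt 2 / (1 - δ - θ)) * Real.sqrt S * (lam * σ) +
        2 * ((1 - δ + θ) / (1 - δ - θ)) * (Real.sqrt S)⁻¹ * ∑ i ∈ T0ᶜ, |β i| := by
  let h := βt - β
  have hβfeas : ∀ i, |(Xtᵀ *ᵥ (y - Xt *ᵥ β)) i| ≤ lam * σ := by simpa [hy] using hnoise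
  obtain ⟨W, l, hT0W, hWcard, hl, hlW, hshift⟩ := exists_superset_blockNormSum_compl_le h hS T0
  have hW : W.card ≤ 2 * S := by omega
  have henergy := one_sub_mul_sum_sq_le_of_abs_transpose_mulVec_le Xt h hW
    (fun b hb => (hRIP b hb).1) (abs_transpose_mulVec_mulVec_sub_le Xt y βt β hfeas hβfeas)
    (abs_dotProduct_mulVec_indicator_compl_le Xt h hRO hS hW hl hlW)
  have hW1 := sum_abs_le_sqrt_mul_sqrt_sum_sq_of_subset h subset_rfl (k := 2 * S)
    (by exact_mod_cast hW)
  have hT0 := sum_abs_le_sqrt_mul_sqrt_sum_sq_of_subset h hT0W (k := S)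
    (by exact_mod_cast hT0card.le)
  have hcone : ∑ i ∈ T0ᶜ, |h i| ≤ ∑ i ∈ T0, |h i| + 2 * ∑ i ∈ T0ᶜ, |β i| :=
    sum_compl_abs_sub_le T0 β βt (hmin β hβfeas)
  refine dantzig_bound_of_estimates hθ0 hsum (by positivity) (by exact_mod_cast hS)
    (Real.sqrt_nonneg _) (sum_nonneg fun i _ => abs_nonneg _) ?_ (by linarith)
    (sqrt_sum_sq_le_add_blockNormSum h hS hl hlW)
  rw [Real.sq_sqrt (sum_nonneg fun i _ => sq_nonneg _)]
  linarith [mul_le_mul_of_nonneg_left hW1 (by positivity : 0 ≤ 2 * (lam * σ))]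

theorem dantzig_selector_error_bound (n p S : ℕ) (hS : 0 < S)
    (δ θ lam σ : ℝ) (hδ0 : 0 ≤ δ) (hθ0 : 0 ≤ θ) (hsum : δ + θ < 1)
    (hlam : 0 < lam) (hσ : 0 < σ)
    (Xt : Matrix (Fin n) (Fin p) ℝ)
    (hRIP : ∀ b : Fin p → ℝ, (Finset.univ.filter fun i => b i ≠ 0).card ≤ 2 * S →
      (1 - δ) * ∑ i, (b i) ^ 2 ≤ ∑ j, (Xt.mulVec b j) ^ 2 ∧
      ∑ j, (Xt.mulVec b j) ^ 2 ≤ (1 + δ) * ∑ i, (b i) ^ 2)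
    (hRO : ∀ (b b' : Fin p → ℝ) (T T' : Finset (Fin p)), Disjoint T T' →
      T.card ≤ S → T'.card ≤ 2 * S →
      (∀ i ∉ T, b i = 0) → (∀ i ∉ T', b' i = 0) →
      |∑ j, Xt.mulVec b j * Xt.mulVec b' j| ≤
        θ * Real.sqrt (∑ i, (b i) ^ 2) * Real.sqrt (∑ i, (b' i) ^ 2))
    (β : Fin p → ℝ) (y : Fin n → ℝ) (eN : Fin n → ℝ)
    (hy : y = Xt.mulVec β + eN)
    (hnoise : ∀ i, |Xtᵀ.mulVec eN i| ≤ lam * σ)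
    -- T₀ is the set of the S largest-magnitude entries of β
    (T0 : Finset (Fin p)) (hT0card : T0.card = S)
    (hT0 : ∀ i ∈ T0, ∀ j ∉ T0, |β j| ≤ |β i|)
    -- β̃ minimizes the ℓ₁ norm subject to the Dantzig constraint
    (βt : Fin p → ℝ)
    (hfeas : ∀ i, |Xtᵀ.mulVec (y - Xt.mulVec βt) i| ≤ lam * σ)
    (hmin : ∀ b : Fin p → ℝ, (∀ i, |Xtᵀ.mulVec (y - Xt.mulVec b) i| ≤ lam * σ) →
      ∑ i, |βt i| ≤ ∑ i, |b i|) :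
    Real.sqrt (∑ i, (βt i - β i) ^ 2) ≤
      (4 * Real.sqrt 2 / (1 - δ - θ)) * Real.sqrt S * (lam * σ) +
        2 * ((1 - δ + θ) / (1 - δ - θ)) * (Real.sqrt S)⁻¹ * ∑ i ∈ T0ᶜ, |β i| :=
  dantzig_selector_error_bound_general n p S hS δ θ lam σ hθ0 hsum hlam hσ Xt hRIP hRO β y eN hy
    hnoise T0 hT0card βt hfeas hmin
end

section
/- Let Φ : ℝⁿ → {0,1} be a measurable test, let B ⊆ ℝᵖ and P ⊆ ℝᵖ be measurable sets, Π a probability measure on ℝᵖ, and suppose: (i) E_{β⁰}Φ ≤ η₁; (ii) sup_{β ∈ B ∩ P} E_β(1-Φ) ≤ η₁; (iii) for all y in a measurable set A, ∫ f(y|β)/f(y|β⁰) dΠ(β) ≥ c > 0, where f(y|β) is the Gaussian likelihood. Then E_{β⁰}[Π(B | y)] ≤ η₁ + (1/c)·(Π(B ∖ P) + η₁) + Pr_{β⁰}(Aᶜ), where Π(B|y) = ∫_B f(y|β)dΠ(β) / ∫ f(y|β)dΠ(β). -/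
/-!
Pointwise, `Π(B|y) ≤ Φ(y) + (1 - Φ(y)) Π(B|y) 1_A(y) + 1_{Aᶜ}(y)`. On `A` the evidence
`∫ f(y|β) dΠ(β)` is at least `c f(y|β⁰)`, so there
`(1 - Φ) Π(B|y) f(y|β⁰) ≤ (1 - Φ) ∫_B f(y|β) dΠ(β) / c`. Integrating in `y` and swapping the
integrals turns this into `∫_B E_β(1 - Φ) dΠ(β) / c`, and `E_β(1 - Φ)` is at most `1` on `B ∖ P`
and at most `η₁` on `B ∩ P`.
-/

open MeasureTheory Matrix Function

noncomputable def isotropicGaussianPDF {n : ℕ} (σ : ℝ) (m y : Fin n → ℝ) : ℝ :=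
  (2 * Real.pi * σ ^ 2) ^ (-(n : ℝ) / 2) * Real.exp (-(∑ j, (y j - m j) ^ 2) / (2 * σ ^ 2))

section IsotropicGaussian

variable {n : ℕ} {σ : ℝ}

lemma isotropicGaussianPDF_nonneg (m y : Fin n → ℝ) : 0 ≤ isotropicGaussianPDF σ m y := by
  unfold isotropicGaussianPDF; positivity

lemma isotropicGaussianPDF_le (m y : Fin n → ℝ) :
    isotropicGaussianPDF σ m y ≤ (2 * Real.pi * σ ^ 2) ^ (-(n : ℝ) / 2) := by
  refine mul_le_of_le_one_right (by positivity) (Real.exp_le_one_iff.2 ?_)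
  exact div_nonpos_of_nonpos_of_nonneg
    (neg_nonpos.2 (Finset.sum_nonneg fun j _ ↦ sq_nonneg _)) (by positivity)

lemma isotropicGaussianPDF_eq_prod (hσ : σ ≠ 0) (m y : Fin n → ℝ) :
    isotropicGaussianPDF σ m y =
      ∏ j, ProbabilityTheory.gaussianPDFReal (m j) ⟨σ ^ 2, sq_nonneg σ⟩ (y j) := by
  have hpos : 0 < 2 * Real.pi * σ ^ 2 := by positivity
  have hnorm : (2 * Real.pi * σ ^ 2) ^ (-(n : ℝ) / 2) = (√(2 * Real.pi * σ ^ 2))⁻¹ ^ n := by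
    rw [Real.sqrt_eq_rpow, ← Real.rpow_neg hpos.le, ← Real.rpow_natCast _ n,
      ← Real.rpow_mul hpos.le]
    ring_nf
  rw [isotropicGaussianPDF, hnorm]
  simp only [ProbabilityTheory.gaussianPDFReal, Finset.prod_mul_distrib, Finset.prod_const,
    Finset.card_univ, Fintype.card_fin, ← Real.exp_sum, neg_div, Finset.sum_div,
    Finset.sum_neg_distrib]
  rfl

lemma integral_isotropicGaussianPDF (hσ : σ ≠ 0) (m : Fin n → ℝ) :
    ∫ y, isotropicGaussianPDF σ m y = 1 := by
  have hv : (⟨σ ^ 2, sq_nonneg σ⟩ : NNReal) ≠ 0 := by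
    simpa [← NNReal.coe_ne_zero] using hσ
  simp_rw [isotropicGaussianPDF_eq_prod hσ, integral_fintype_prod_volume_eq_prod,
    ProbabilityTheory.integral_gaussianPDFReal_eq_one _ hv, Finset.prod_const_one]

lemma continuous_isotropicGaussianPDF :
    Continuous fun q : (Fin n → ℝ) × (Fin n → ℝ) ↦ isotropicGaussianPDF σ q.1 q.2 := by
  unfold isotropicGaussianPDF; fun_prop

end IsotropicGaussian

lemma setIntegral_le_measureReal_diff_add {Θ : Type*} [MeasurableSpace Θ] {ν : Measure Θ}
    [IsFiniteMeasure ν] {h : Θ → ℝ} {B P : Set Θ} {η : ℝ} (hB : MeasurableSet B)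
    (hP : MeasurableSet P) (hh : IntegrableOn h B ν) (h_le_one : ∀ β ∈ B \ P, h β ≤ 1)
    (h_le : ∀ β ∈ B ∩ P, h β ≤ η) :
    ∫ β in B, h β ∂ν ≤ ν.real (B \ P) + η * ν.real (B ∩ P) := by
  have hBP : MeasurableSet (B ∩ P) := hB.inter hP
  have hsplit := setIntegral_union (Set.disjoint_sdiff_inter (s := B) (t := P)) hBP
    (hh.mono_set Set.sdiff_subset) (hh.mono_set Set.inter_subset_left)
  rw [Set.sdiff_union_inter] at hsplit
  rw [hsplit]
  gcongr
  · calc ∫ β in B \ P, h β ∂ν ≤ ∫ _ in B \ P, 1 ∂ν :=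
          setIntegral_mono_on (hh.mono_set Set.sdiff_subset) integrableOn_const
            (hB.diff hP) h_le_one
      _ = ν.real (B \ P) := by simp
  · calc ∫ β in B ∩ P, h β ∂ν ≤ ∫ _ in B ∩ P, η ∂ν :=
          setIntegral_mono_on (hh.mono_set Set.inter_subset_left) integrableOn_const hBP h_le
      _ = η * ν.real (B ∩ P) := by rw [setIntegral_const, smul_eq_mul, mul_comm]

lemma mul_le_integral_of_le_integral_div {Θ : Type*} [MeasurableSpace Θ] {ν : Measure Θ}
    {F : Θ → ℝ} {a c : ℝ} (hc : 0 < c) (ha : 0 ≤ a) (h : c ≤ ∫ β, F β / a ∂ν) :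
    c * a ≤ ∫ β, F β ∂ν := by
  rw [integral_div] at h
  rcases ha.eq_or_lt with rfl | ha
  · rw [div_zero] at h; linarith
  · exact (le_div_iff₀ ha).1 h

noncomputable def posteriorProb {Y Θ : Type*} [MeasurableSpace Θ] (ν : Measure Θ)
    (f : Y → Θ → ℝ) (B : Set Θ) (y : Y) : ℝ :=
  (∫ β in B, f y β ∂ν) / ∫ β, f y β ∂ν

section Posterior

variable {Y Θ : Type*} [MeasurableSpace Θ] {ν : Measure Θ} {f : Y → Θ → ℝ}

lemma posteriorProb_nonneg (hf0 : ∀ y β, 0 ≤ f y β) (B : Set Θ) (y : Y) :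
    0 ≤ posteriorProb ν f B y :=
  div_nonneg (integral_nonneg (hf0 y)) (integral_nonneg (hf0 y))

lemma posteriorProb_le_one (hf0 : ∀ y β, 0 ≤ f y β) {y : Y} (hfν : Integrable (f y) ν)
    (B : Set Θ) : posteriorProb ν f B y ≤ 1 :=
  div_le_one_of_le₀ (setIntegral_le_integral hfν (ae_of_all _ (hf0 y)))
    (integral_nonneg (hf0 y))

lemma posteriorProb_mul_le_of_mul_le (hf0 : ∀ y β, 0 ≤ f y β) {y : Y} {a c : ℝ} (hc : 0 < c)
    (h : c * a ≤ ∫ β, f y β ∂ν) (B : Set Θ) :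
    posteriorProb ν f B y * a ≤ (∫ β in B, f y β ∂ν) / c := by
  have hnum : 0 ≤ ∫ β in B, f y β ∂ν := integral_nonneg (hf0 y)
  rcases (integral_nonneg (hf0 y) : 0 ≤ ∫ β, f y β ∂ν).eq_or_lt with hden | hden
  · simp only [posteriorProb, ← hden, div_zero, zero_mul]
    positivity
  · rw [posteriorProb, div_mul_eq_mul_div, div_le_div_iff₀ hden hc, mul_assoc, mul_comm a]
    exact mul_le_mul_of_nonneg_left h hnum

lemma posteriorProb_mul_le_add_indicator (hf0 : ∀ y β, 0 ≤ f y β) {y : Y}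
    (hfν : Integrable (f y) ν) {β₀ : Θ} {Φ : Y → ℝ} (hΦ0 : 0 ≤ Φ y) (hΦ1 : Φ y ≤ 1)
    {A : Set Y} {c : ℝ} (hc : 0 < c) (h3 : y ∈ A → c ≤ ∫ β, f y β / f y β₀ ∂ν) (B : Set Θ) :
    posteriorProb ν f B y * f y β₀ ≤ Φ y * f y β₀ +
      A.indicator (fun y ↦ (1 - Φ y) * (∫ β in B, f y β ∂ν) / c) y +
      Aᶜ.indicator (f · β₀) y := by
  have hr1 := posteriorProb_le_one hf0 hfν B
  have hf₀ := hf0 y β₀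
  have hmix : posteriorProb ν f B y * f y β₀ ≤
      Φ y * f y β₀ + (1 - Φ y) * (posteriorProb ν f B y * f y β₀) := by
    nlinarith [mul_nonneg (mul_nonneg hΦ0 hf₀) (sub_nonneg.2 hr1)]
  by_cases hy : y ∈ A
  · have hA := posteriorProb_mul_le_of_mul_le hf0 hc
      (mul_le_integral_of_le_integral_div hc hf₀ (h3 hy)) B
    rw [Set.indicator_of_mem hy, Set.indicator_of_notMem (Set.notMem_compl_iff.2 hy),
      add_zero, mul_div_assoc]
    exact hmix.trans (by gcongr)
  · rw [Set.indicator_of_notMem hy, Set.indicator_of_mem (Set.mem_compl hy), add_zero]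
    linarith [mul_le_of_le_one_left hf₀ hr1, mul_nonneg hΦ0 hf₀]

end Posterior

section Likelihood

variable {Y Θ : Type*} [MeasurableSpace Y] [MeasurableSpace Θ] {μ : Measure Y} {ν : Measure Θ}
  {f : Y → Θ → ℝ}

lemma integrable_uncurry_of_integral_eq_one [SFinite μ] [IsFiniteMeasure ν]
    (hf : Measurable (uncurry f)) (hf0 : ∀ y β, 0 ≤ f y β) (hf1 : ∀ β, ∫ y, f y β ∂μ = 1) :
    Integrable (uncurry f) (μ.prod ν) := by
  refine (integrable_prod_iff' hf.aestronglyMeasurable).2 ⟨ae_of_all _ fun β ↦ ?_, ?_⟩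
  · exact Integrable.of_integral_ne_zero (by simp [hf1])
  · simp [Real.norm_of_nonneg (hf0 _ _), hf1]

lemma integrable_uncurry_mul_of_integral_eq_one [SFinite μ] [IsFiniteMeasure ν] {g : Y → ℝ}
    (hg : Measurable g) (hg1 : ∀ y, |g y| ≤ 1) (hf : Measurable (uncurry f))
    (hf0 : ∀ y β, 0 ≤ f y β) (hf1 : ∀ β, ∫ y, f y β ∂μ = 1) :
    Integrable (uncurry fun y β ↦ g y * f y β) (μ.prod ν) :=
  (integrable_uncurry_of_integral_eq_one hf hf0 hf1).bdd_mul
    (hg.comp measurable_fst).aestronglyMeasurable (ae_of_all _ fun q ↦ hg1 q.1)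

lemma integral_mul_integral_swap [SFinite μ] [IsFiniteMeasure ν] {g : Y → ℝ}
    (hg : Measurable g) (hg1 : ∀ y, |g y| ≤ 1) (hf : Measurable (uncurry f))
    (hf0 : ∀ y β, 0 ≤ f y β) (hf1 : ∀ β, ∫ y, f y β ∂μ = 1) :
    ∫ y, g y * ∫ β, f y β ∂ν ∂μ = ∫ β, ∫ y, g y * f y β ∂μ ∂ν := by
  simp_rw [← integral_const_mul]
  exact integral_integral_swap (integrable_uncurry_mul_of_integral_eq_one hg hg1 hf hf0 hf1)

lemma integrable_mul_integral [SFinite μ] [IsFiniteMeasure ν] {g : Y → ℝ}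
    (hg : Measurable g) (hg1 : ∀ y, |g y| ≤ 1) (hf : Measurable (uncurry f))
    (hf0 : ∀ y β, 0 ≤ f y β) (hf1 : ∀ β, ∫ y, f y β ∂μ = 1) :
    Integrable (fun y ↦ g y * ∫ β, f y β ∂ν) μ := by
  simp_rw [← integral_const_mul]
  exact (integrable_uncurry_mul_of_integral_eq_one hg hg1 hf hf0 hf1).integral_prod_left

lemma integrable_integral_mul [SFinite μ] [IsFiniteMeasure ν] {g : Y → ℝ}
    (hg : Measurable g) (hg1 : ∀ y, |g y| ≤ 1) (hf : Measurable (uncurry f))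
    (hf0 : ∀ y β, 0 ≤ f y β) (hf1 : ∀ β, ∫ y, f y β ∂μ = 1) :
    Integrable (fun β ↦ ∫ y, g y * f y β ∂μ) ν :=
  (integrable_uncurry_mul_of_integral_eq_one hg hg1 hf hf0 hf1).integral_prod_right

lemma integral_mul_le_one {g : Y → ℝ} (hg : Measurable g) (hg0 : ∀ y, 0 ≤ g y)
    (hg1 : ∀ y, g y ≤ 1) {F : Y → ℝ} (hF0 : ∀ y, 0 ≤ F y) (hF1 : ∫ y, F y ∂μ = 1) :
    ∫ y, g y * F y ∂μ ≤ 1 := by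
  have hF : Integrable F μ := .of_integral_ne_zero (by simp [hF1])
  rw [← hF1]
  refine integral_mono (hF.bdd_mul (c := 1) hg.aestronglyMeasurable (ae_of_all _ fun y ↦ ?_)) hF
    fun y ↦ mul_le_of_le_one_left (hF0 y) (hg1 y)
  rw [Real.norm_of_nonneg (hg0 y)]; exact hg1 y

lemma measurable_posteriorProb [SFinite ν] (hf : Measurable (uncurry f)) (B : Set Θ) :
    Measurable (posteriorProb ν f B) :=
  (hf.stronglyMeasurable.integral_prod_right' (ν := ν.restrict B)).measurable.div
    (hf.stronglyMeasurable.integral_prod_right' (ν := ν)).measurable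

theorem integral_mul_setIntegral_le [SFinite μ] [IsProbabilityMeasure ν]
    (hf : Measurable (uncurry f)) (hf0 : ∀ y β, 0 ≤ f y β) (hf1 : ∀ β, ∫ y, f y β ∂μ = 1)
    {Φ : Y → ℝ} (hΦ : Measurable Φ) (hΦ0 : ∀ y, 0 ≤ Φ y) (hΦ1 : ∀ y, Φ y ≤ 1) {B P : Set Θ}
    (hB : MeasurableSet B) (hP : MeasurableSet P) {η : ℝ} (hη : 0 ≤ η)
    (h2 : ∀ β ∈ B ∩ P, ∫ y, (1 - Φ y) * f y β ∂μ ≤ η) :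
    ∫ y, (1 - Φ y) * ∫ β in B, f y β ∂ν ∂μ ≤ ν.real (B \ P) + η := by
  have hΦc : Measurable fun y ↦ 1 - Φ y := measurable_const.sub hΦ
  have hΦc1 : ∀ y, |1 - Φ y| ≤ 1 := fun y ↦ abs_le.2 ⟨by linarith [hΦ1 y], by linarith [hΦ0 y]⟩
  calc ∫ y, (1 - Φ y) * ∫ β in B, f y β ∂ν ∂μ
      = ∫ β in B, ∫ y, (1 - Φ y) * f y β ∂μ ∂ν :=
        integral_mul_integral_swap hΦc hΦc1 hf hf0 hf1
    _ ≤ ν.real (B \ P) + η * ν.real (B ∩ P) :=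
        setIntegral_le_measureReal_diff_add hB hP (integrable_integral_mul hΦc hΦc1 hf hf0 hf1)
          (fun β _ ↦ integral_mul_le_one hΦc (fun y ↦ by linarith [hΦ1 y])
            (fun y ↦ by linarith [hΦ0 y]) (hf0 · β) (hf1 β))
          h2
    _ ≤ ν.real (B \ P) + η := by gcongr; exact mul_le_of_le_one_right hη measureReal_le_one

theorem integral_posteriorProb_mul_le [SFinite μ] [IsProbabilityMeasure ν]
    (hf : Measurable (uncurry f)) (hf0 : ∀ y β, 0 ≤ f y β) (hfν : ∀ y, Integrable (f y) ν)
    (hf1 : ∀ β, ∫ y, f y β ∂μ = 1) {β₀ : Θ} {Φ : Y → ℝ} (hΦ : Measurable Φ)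
    (hΦ0 : ∀ y, 0 ≤ Φ y) (hΦ1 : ∀ y, Φ y ≤ 1) {B P : Set Θ} (hB : MeasurableSet B)
    (hP : MeasurableSet P) {A : Set Y} (hA : MeasurableSet A) {η c : ℝ} (hη : 0 ≤ η)
    (hc : 0 < c) (h1 : ∫ y, Φ y * f y β₀ ∂μ ≤ η)
    (h2 : ∀ β ∈ B ∩ P, ∫ y, (1 - Φ y) * f y β ∂μ ≤ η)
    (h3 : ∀ y ∈ A, c ≤ ∫ β, f y β / f y β₀ ∂ν) :
    ∫ y, posteriorProb ν f B y * f y β₀ ∂μ ≤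
      η + 1 / c * (ν.real (B \ P) + η) + ∫ y in Aᶜ, f y β₀ ∂μ := by
  set num : Y → ℝ := fun y ↦ ∫ β in B, f y β ∂ν
  have hf₀ : Integrable (f · β₀) μ := .of_integral_ne_zero (by simp [hf1])
  have hΦc1 : ∀ y, |1 - Φ y| ≤ 1 := fun y ↦ abs_le.2 ⟨by linarith [hΦ1 y], by linarith [hΦ0 y]⟩
  have hT1 : Integrable (fun y ↦ Φ y * f y β₀) μ :=
    hf₀.bdd_mul (c := 1) hΦ.aestronglyMeasurable
      (ae_of_all _ fun y ↦ by rw [Real.norm_of_nonneg (hΦ0 y)]; exact hΦ1 y)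
  have hT2 : Integrable (fun y ↦ (1 - Φ y) * num y / c) μ :=
    (integrable_mul_integral (measurable_const.sub hΦ) hΦc1 hf hf0 hf1).div_const c
  have hT2_le : ∫ y, A.indicator (fun y ↦ (1 - Φ y) * num y / c) y ∂μ ≤
      1 / c * (ν.real (B \ P) + η) := calc
    _ = ∫ y in A, (1 - Φ y) * num y / c ∂μ := integral_indicator hA
    _ ≤ ∫ y, (1 - Φ y) * num y / c ∂μ :=
        setIntegral_le_integral hT2 (ae_of_all _ fun y ↦ div_nonneg
          (mul_nonneg (by linarith [hΦ1 y]) (integral_nonneg (hf0 y))) hc.le)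
    _ ≤ 1 / c * (ν.real (B \ P) + η) := by
        rw [integral_div, ← one_div_mul_eq_div]
        gcongr
        exact integral_mul_setIntegral_le hf hf0 hf1 hΦ hΦ0 hΦ1 hB hP hη h2
  have hLHS : Integrable (fun y ↦ posteriorProb ν f B y * f y β₀) μ :=
    hf₀.bdd_mul (c := 1) (measurable_posteriorProb hf B).aestronglyMeasurable
      (ae_of_all _ fun y ↦ by
        rw [Real.norm_of_nonneg (posteriorProb_nonneg hf0 B y)]
        exact posteriorProb_le_one hf0 (hfν y) B)
  calc ∫ y, posteriorProb ν f B y * f y β₀ ∂μ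
      ≤ ∫ y, Φ y * f y β₀ + A.indicator (fun y ↦ (1 - Φ y) * num y / c) y +
          Aᶜ.indicator (f · β₀) y ∂μ :=
        integral_mono hLHS ((hT1.add (hT2.indicator hA)).add (hf₀.indicator hA.compl))
          fun y ↦ posteriorProb_mul_le_add_indicator hf0 (hfν y) (hΦ0 y) (hΦ1 y) hc (h3 y) B
    _ = ∫ y, Φ y * f y β₀ ∂μ + ∫ y, A.indicator (fun y ↦ (1 - Φ y) * num y / c) y ∂μ +
          ∫ y in Aᶜ, f y β₀ ∂μ := by
        rw [integral_add (by exact hT1.add (hT2.indicator hA)) (hf₀.indicator hA.compl),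
          integral_add hT1 (hT2.indicator hA), integral_indicator hA.compl]
    _ ≤ _ := by gcongr

end Likelihood

theorem schwartz_divide_and_conquer (n p : ℕ) (σ : ℝ) (hσ : 0 < σ)
    (X : Matrix (Fin n) (Fin p) ℝ)
    (f : (Fin n → ℝ) → (Fin p → ℝ) → ℝ)
    (hf : ∀ y β, f y β = (2 * Real.pi * σ ^ 2) ^ (-(n : ℝ) / 2) *
      Real.exp (-(∑ j, (y j - X.mulVec β j) ^ 2) / (2 * σ ^ 2)))
    (Pi : Measure (Fin p → ℝ)) [IsProbabilityMeasure Pi]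
    (β0 : Fin p → ℝ)
    (Φ : (Fin n → ℝ) → ℝ) (hΦmeas : Measurable Φ)
    (hΦ01 : ∀ y, Φ y = 0 ∨ Φ y = 1)
    (B P : Set (Fin p → ℝ)) (hB : MeasurableSet B) (hP : MeasurableSet P)
    (A : Set (Fin n → ℝ)) (hA : MeasurableSet A)
    (η₁ c : ℝ) (hη₁ : 0 ≤ η₁) (hc : 0 < c)
    (h1 : ∫ y, Φ y * f y β0 ≤ η₁)
    (h2 : ∀ β ∈ B ∩ P, ∫ y, (1 - Φ y) * f y β ≤ η₁)
    (h3 : ∀ y ∈ A, c ≤ ∫ β, f y β / f y β0 ∂Pi) :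
    ∫ y, ((∫ β in B, f y β ∂Pi) / (∫ β, f y β ∂Pi)) * f y β0 ≤
      η₁ + (1 / c) * ((Pi (B \ P)).toReal + η₁) + ∫ y in Aᶜ, f y β0 := by
  obtain rfl : f = fun y β ↦ isotropicGaussianPDF σ (X *ᵥ β) y := funext₂ hf
  have hmeas : Measurable (uncurry fun y β ↦ isotropicGaussianPDF σ (X *ᵥ β) y) :=
    (continuous_isotropicGaussianPDF.comp
      (by fun_prop : Continuous fun q : (Fin n → ℝ) × (Fin p → ℝ) ↦ (X *ᵥ q.2, q.1))).measurable
  have hΦ0 : ∀ y, 0 ≤ Φ y := fun y ↦ by rcases hΦ01 y with h | h <;> simp [h]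
  have hΦ1 : ∀ y, Φ y ≤ 1 := fun y ↦ by rcases hΦ01 y with h | h <;> simp [h]
  have hPi : ∀ y, Integrable (fun β ↦ isotropicGaussianPDF σ (X *ᵥ β) y) Pi := fun y ↦
    .of_bound (hmeas.comp measurable_prodMk_left).aestronglyMeasurable _
      (ae_of_all _ fun β ↦ by
        rw [Real.norm_of_nonneg (isotropicGaussianPDF_nonneg _ _)]
        exact isotropicGaussianPDF_le _ _)
  exact integral_posteriorProb_mul_le hmeas (fun _ _ ↦ isotropicGaussianPDF_nonneg _ _) hPi
    (fun _ ↦ integral_isotropicGaussianPDF hσ.ne' _) hΦmeas hΦ0 hΦ1 hB hP hA hη₁ hc h1 h2 h3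
end

section
/- For p > 1, σ > 0, n ≥ 1, and C₁ = (1/3)√(2σ²·2·log p / n) (the constant C_τ with τ = 1), the S-dimensional ℓ₁-ball of radius C₁ has volume (2C₁)^S/S! ≥ (2C₁)^S/S^S; consequently, combining with the density lower bound, the sparsity(S)-Gaussian prior satisfies Π(B_{C₁}^{ℓ₁}(β⁰)) ≥ e^{-C₁²/(2V²)}·(2σ/(3e^{C²/(2V²)}√(π e²V²)))^S·((1/p)√(log p / n))^S for every S-sparse β⁰ with ‖β⁰‖_∞ ≤ C. -/
open MeasureTheory ProbabilityTheory Real ENNReal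
open NNReal


lemma L1 (k : ℕ) (a b A : ℝ) (hab : a ≤ b) (hA : 0 ≤ A) :
    ENNReal.ofReal (A * (b - a) ^ (k + 1) / (k + 1)) ≤
      ∫⁻ t in Set.Ioo a b, ENNReal.ofReal (A * (t - a) ^ k) := by
  have hint : IntegrableOn (fun t => A * (t - a) ^ k) (Set.Ioo a b) volume := by
    apply (Continuous.integrableOn_Icc (by continuity)).mono_set Set.Ioo_subset_Icc_self
  rw [← ofReal_integral_eq_lintegral_ofReal hint]
  · apply ENNReal.ofReal_le_ofReal
    rw [← MeasureTheory.integral_Ioc_eq_integral_Ioo, ← intervalIntegral.integral_of_le hab,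
      intervalIntegral.integral_const_mul]
    have := intervalIntegral.integral_comp_sub_right (fun x => x ^ k) a (a := a) (b := b)
    rw [this, sub_self, integral_pow]
    rw [zero_pow (Nat.succ_ne_zero k), sub_zero, mul_div_assoc]
  · filter_upwards [ae_restrict_mem measurableSet_Ioo] with t ht
    exact mul_nonneg hA (pow_nonneg (by simp at ht; linarith [ht.1]) _)

lemma L1' (k : ℕ) (a b A : ℝ) (hab : a ≤ b) (hA : 0 ≤ A) :
    ENNReal.ofReal (A * (b - a) ^ (k + 1) / (k + 1)) ≤
      ∫⁻ t in Set.Ioo a b, ENNReal.ofReal (A * (b - t) ^ k) := by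
  have hint : IntegrableOn (fun t => A * (b - t) ^ k) (Set.Ioo a b) volume := by
    apply (Continuous.integrableOn_Icc (by continuity)).mono_set Set.Ioo_subset_Icc_self
  rw [← ofReal_integral_eq_lintegral_ofReal hint]
  · apply ENNReal.ofReal_le_ofReal
    rw [← MeasureTheory.integral_Ioc_eq_integral_Ioo, ← intervalIntegral.integral_of_le hab,
      intervalIntegral.integral_const_mul]
    have := intervalIntegral.integral_comp_sub_left (fun x => x ^ k) b (a := a) (b := b)
    rw [this, sub_self, integral_pow]
    rw [zero_pow (Nat.succ_ne_zero k), sub_zero, mul_div_assoc]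
  · filter_upwards [ae_restrict_mem measurableSet_Ioo] with t ht
    exact mul_nonneg hA (pow_nonneg (by simp at ht; linarith [ht.2]) _)

lemma key1 (V C : ℝ) (hV : 0 < V) (hC : 0 ≤ C) (v : ℝ≥0) (hvv : (v : ℝ) = V ^ 2)
    (d r : ℝ) (hd : |d| ≤ C) (hr : 0 < r) (S' : ℕ) (F : ℝ → ℝ≥0∞)
    (hFb : ∀ t : ℝ, |t - d| < r →
      ENNReal.ofReal ((Real.sqrt (2 * π * V ^ 2))⁻¹ ^ S' *
        Real.exp (-((S' : ℝ) * C ^ 2 + (r - |t - d|) ^ 2) / (2 * V ^ 2)) *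
        (r - |t - d|) ^ S' / (S'.factorial : ℝ)) ≤ F t) :
    ENNReal.ofReal ((Real.sqrt (2 * π * V ^ 2))⁻¹ ^ (S' + 1) *
        Real.exp (-(((S' : ℝ) + 1) * C ^ 2 + r ^ 2) / (2 * V ^ 2)) *
        r ^ (S' + 1) / ((S' + 1).factorial : ℝ)) ≤
      ∫⁻ t, gaussianPDF 0 v t * F t := by
  set K : ℝ := (Real.sqrt (2 * π * V ^ 2))⁻¹ with hK
  have hK0 : 0 ≤ K := inv_nonneg.mpr (Real.sqrt_nonneg _)
  set E : ℝ := Real.exp (-(((S' : ℝ) + 1) * C ^ 2 + r ^ 2) / (2 * V ^ 2)) with hE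
  set A : ℝ := K ^ (S' + 1) * E / (S'.factorial : ℝ) with hA
  have hA0 : 0 ≤ A := by positivity
  -- pointwise bound
  have hpt : ∀ t : ℝ, 0 < |t - d| → |t - d| < r → t ^ 2 ≤ C ^ 2 + (t - d) ^ 2 →
      ENNReal.ofReal (A * (r - |t - d|) ^ S') ≤ gaussianPDF 0 v t * F t := by
    intro t hs0 hsr ht2
    have habs : |t - d| ^ 2 = (t - d) ^ 2 := sq_abs _
    have h1 : gaussianPDF 0 v t = ENNReal.ofReal (K * Real.exp (-t ^ 2 / (2 * V ^ 2))) := by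
      rw [gaussianPDF, gaussianPDFReal, hvv, sub_zero]
    have hsr' : 0 ≤ r - |t - d| := by linarith
    calc ENNReal.ofReal (A * (r - |t - d|) ^ S')
        ≤ ENNReal.ofReal ((K * Real.exp (-t ^ 2 / (2 * V ^ 2))) *
            (K ^ S' * Real.exp (-((S' : ℝ) * C ^ 2 + (r - |t - d|) ^ 2) / (2 * V ^ 2)) *
            (r - |t - d|) ^ S' / (S'.factorial : ℝ))) := by
          apply ENNReal.ofReal_le_ofReal
          have hexp : E ≤ Real.exp (-t ^ 2 / (2 * V ^ 2)) *
              Real.exp (-((S' : ℝ) * C ^ 2 + (r - |t - d|) ^ 2) / (2 * V ^ 2)) := by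
            rw [← Real.exp_add, hE]
            apply Real.exp_le_exp.mpr
            rw [← add_div]
            apply div_le_div_of_nonneg_right ?_ (by positivity)
            nlinarith [mul_pos hs0 (sub_pos.mpr hsr)]
          have hp0 : (0:ℝ) ≤ (r - |t - d|) ^ S' := pow_nonneg hsr' _
          calc A * (r - |t - d|) ^ S'
              = (K ^ (S' + 1) / (S'.factorial : ℝ)) * E * (r - |t - d|) ^ S' := by
                rw [hA]; ring
            _ ≤ (K ^ (S' + 1) / (S'.factorial : ℝ)) *
                  (Real.exp (-t ^ 2 / (2 * V ^ 2)) *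
                   Real.exp (-((S' : ℝ) * C ^ 2 + (r - |t - d|) ^ 2) / (2 * V ^ 2))) *
                  (r - |t - d|) ^ S' := by
                apply mul_le_mul_of_nonneg_right _ hp0
                exact mul_le_mul_of_nonneg_left hexp (by positivity)
            _ = _ := by ring
        _ ≤ gaussianPDF 0 v t * F t := by
          rw [ENNReal.ofReal_mul (by positivity), h1]
          exact mul_le_mul' le_rfl (hFb t hsr)
  have hgoal_eq : ENNReal.ofReal (K ^ (S' + 1) * E * r ^ (S' + 1) / ((S' + 1).factorial : ℝ))
      = ENNReal.ofReal (A * r ^ (S' + 1) / ((S' : ℝ) + 1)) := by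
    congr 1
    rw [hA, Nat.factorial_succ]
    push_cast
    have h1 : (S'.factorial : ℝ) ≠ 0 := Nat.cast_ne_zero.mpr S'.factorial_ne_zero
    have h2 : ((S' : ℝ) + 1) ≠ 0 := by positivity
    field_simp
  rw [hgoal_eq]
  rcases le_or_gt 0 d with hd0 | hd0
  · -- interval (d - r, d)
    calc ENNReal.ofReal (A * r ^ (S' + 1) / ((S' : ℝ) + 1))
        ≤ ∫⁻ t in Set.Ioo (d - r) d, ENNReal.ofReal (A * (t - (d - r)) ^ S') := by
          have := L1 S' (d - r) d A (by linarith) hA0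
          rw [show d - (d - r) = r by ring] at this
          convert this using 3 <;> push_cast <;> ring
      _ ≤ ∫⁻ t in Set.Ioo (d - r) d, gaussianPDF 0 v t * F t := by
          apply setLIntegral_mono' measurableSet_Ioo
          intro t ht
          obtain ⟨ht1, ht2⟩ := ht
          have habs : |t - d| = d - t := by rw [abs_of_neg (by linarith)]; ring
          have h1 : t - (d - r) = r - |t - d| := by rw [habs]; ring
          rw [h1]
          apply hpt t (by rw [habs]; linarith) (by rw [habs]; linarith)
          rcases le_or_gt 0 t with ht0 | ht0
          · have : t ≤ C := le_trans ht2.le (le_trans (le_abs_self d) hd)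
            nlinarith [sq_nonneg (t - d)]
          · have h2 : t ^ 2 ≤ (t - d) ^ 2 := by nlinarith
            nlinarith [sq_nonneg C]
      _ ≤ ∫⁻ t, gaussianPDF 0 v t * F t := setLIntegral_le_lintegral _ _
  · -- interval (d, d + r)
    calc ENNReal.ofReal (A * r ^ (S' + 1) / ((S' : ℝ) + 1))
        ≤ ∫⁻ t in Set.Ioo d (d + r), ENNReal.ofReal (A * ((d + r) - t) ^ S') := by
          have := L1' S' d (d + r) A (by linarith) hA0
          rw [show d + r - d = r by ring] at this
          convert this using 3 <;> push_cast <;> ring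
      _ ≤ ∫⁻ t in Set.Ioo d (d + r), gaussianPDF 0 v t * F t := by
          apply setLIntegral_mono' measurableSet_Ioo
          intro t ht
          obtain ⟨ht1, ht2⟩ := ht
          have habs : |t - d| = t - d := abs_of_pos (by linarith)
          have h1 : (d + r) - t = r - |t - d| := by rw [habs]; ring
          rw [h1]
          apply hpt t (by rw [habs]; linarith) (by rw [habs]; linarith)
          rcases le_or_gt t 0 with ht0 | ht0
          · have hdC : -C ≤ d := neg_le_of_abs_le hd
            have : t ^ 2 ≤ C ^ 2 := by nlinarith
            nlinarith [sq_nonneg (t - d)]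
          · have h2 : t ^ 2 ≤ (t - d) ^ 2 := by nlinarith
            nlinarith [sq_nonneg C]
      _ ≤ ∫⁻ t, gaussianPDF 0 v t * F t := setLIntegral_le_lintegral _ _


lemma main_ind (V C : ℝ) (hV : 0 < V) (hC : 0 ≤ C) :
    ∀ (m : ℕ) (γ : Finset (Fin m)) (c : Fin m → ℝ), (∀ i, |c i| ≤ C) →
      (∀ i ∉ γ, c i = 0) → ∀ r : ℝ, 0 < r →
      ENNReal.ofReal ((Real.sqrt (2 * π * V ^ 2))⁻¹ ^ γ.card *
          Real.exp (-((γ.card : ℝ) * C ^ 2 + r ^ 2) / (2 * V ^ 2)) * r ^ γ.card /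
          (γ.card.factorial : ℝ)) ≤
        Measure.pi (fun i => if i ∈ γ then gaussianReal 0 (Real.toNNReal (V ^ 2))
          else Measure.dirac 0) {β : Fin m → ℝ | ∑ i, |β i - c i| < r} := by
  have hv : Real.toNNReal (V ^ 2) ≠ 0 := by
    simp only [ne_eq, Real.toNNReal_eq_zero, not_le]
    positivity
  have hvv : ((Real.toNNReal (V ^ 2)) : ℝ) = V ^ 2 := Real.coe_toNNReal _ (sq_nonneg V)
  intro m
  induction m with
  | zero =>
    intro γ c hc hc0 r hr
    have hγ : γ = ∅ := Finset.eq_empty_of_isEmpty γ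
    subst hγ
    have hset : {β : Fin 0 → ℝ | ∑ i, |β i - c i| < r} = Set.univ := by
      ext β; simp [hr]
    haveI : ∀ i : Fin 0, IsProbabilityMeasure
        ((fun i => if i ∈ (∅ : Finset (Fin 0)) then gaussianReal 0 (Real.toNNReal (V ^ 2))
          else Measure.dirac 0) i) := fun i => i.elim0
    rw [hset]
    simp only [Finset.card_empty, pow_zero, one_mul, Nat.factorial_zero, Nat.cast_one, div_one,
      Nat.cast_zero, zero_mul, zero_add, measure_univ]
    apply ENNReal.ofReal_le_one.mpr
    rw [mul_one]
    apply Real.exp_le_one_iff.mpr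
    apply div_nonpos_of_nonpos_of_nonneg _ (by positivity)
    simp [sq_nonneg r]
  | succ m ih =>
    intro γ c hc hc0 r hr
    set v := Real.toNNReal (V ^ 2) with hvdef
    set μ := fun i : Fin (m+1) => if i ∈ γ then gaussianReal 0 v else Measure.dirac (0:ℝ) with hμ
    haveI hprob : ∀ i, IsProbabilityMeasure (μ i) := by
      intro i; rw [hμ]; dsimp only; split <;> infer_instance
    set B : Set (ℝ × (Fin m → ℝ)) :=
      {q | |q.1 - c 0| + ∑ j, |q.2 j - c (Fin.succ j)| < r} with hBdef
    have hB : MeasurableSet B := by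
      apply measurableSet_lt _ measurable_const
      apply Measurable.add
      · exact (measurable_fst.sub measurable_const).abs
      · exact Finset.measurable_sum _ fun j _ =>
          (((measurable_pi_apply j).comp measurable_snd).sub measurable_const).abs
    set ν := Measure.pi (fun j : Fin m => μ ((0 : Fin (m+1)).succAbove j)) with hνdef
    haveI : ∀ j : Fin m, IsProbabilityMeasure (μ ((0 : Fin (m+1)).succAbove j)) :=
      fun j => hprob _
    haveI : IsProbabilityMeasure ν := by rw [hνdef]; infer_instance
    have MP := measurePreserving_piFinSuccAbove μ 0
    have hpre : (MeasurableEquiv.piFinSuccAbove (fun _ : Fin (m+1) => ℝ) 0) ⁻¹' B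
        = {β : Fin (m+1) → ℝ | ∑ i, |β i - c i| < r} := by
      ext β
      simp only [Set.mem_preimage, hBdef, Set.mem_setOf_eq,
        MeasurableEquiv.piFinSuccAbove_apply, Fin.insertNthEquiv, Equiv.coe_fn_symm_mk,
        Fin.removeNth, Fin.zero_succAbove]
      rw [Fin.sum_univ_succ]
    have hEQ : Measure.pi μ {β : Fin (m+1) → ℝ | ∑ i, |β i - c i| < r}
        = ∫⁻ t, ν (Prod.mk t ⁻¹' B) ∂(μ 0) := by
      rw [← hpre, MP.measure_preimage hB.nullMeasurableSet, Measure.prod_apply hB]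
    -- γ' and card
    set γ' : Finset (Fin m) := Finset.univ.filter (fun j : Fin m => Fin.succ j ∈ γ) with hγ'
    have hν2 : ν = Measure.pi (fun j : Fin m =>
        if j ∈ γ' then gaussianReal 0 v else Measure.dirac 0) := by
      rw [hνdef]
      congr 1
      funext j
      simp [hμ, hγ', Fin.zero_succAbove]
    have hmap : γ'.map ⟨Fin.succ, Fin.succ_injective m⟩ = γ.erase 0 := by
      ext i
      simp only [hγ', Finset.mem_map, Finset.mem_filter, Finset.mem_univ, true_and,
        Function.Embedding.coeFn_mk, Finset.mem_erase]
      constructor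
      · rintro ⟨j, hj, rfl⟩; exact ⟨Fin.succ_ne_zero j, hj⟩
      · rintro ⟨hne, hi⟩
        obtain ⟨j, rfl⟩ := Fin.eq_succ_of_ne_zero hne
        exact ⟨j, hi, rfl⟩
    have hcard' : γ'.card = (γ.erase 0).card := by rw [← hmap, Finset.card_map]
    have ihb : ∀ ρ : ℝ, 0 < ρ →
        ENNReal.ofReal ((Real.sqrt (2 * π * V ^ 2))⁻¹ ^ γ'.card *
            Real.exp (-((γ'.card : ℝ) * C ^ 2 + ρ ^ 2) / (2 * V ^ 2)) * ρ ^ γ'.card /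
            (γ'.card.factorial : ℝ)) ≤ ν {b : Fin m → ℝ | ∑ j, |b j - c (Fin.succ j)| < ρ} := by
      intro ρ hρ
      rw [hν2]
      apply ih γ' (fun j => c (Fin.succ j)) (fun j => hc _) _ ρ hρ
      intro j hj
      apply hc0
      simpa [hγ'] using hj
    rw [hEQ]
    by_cases h0 : (0 : Fin (m+1)) ∈ γ
    · -- gaussian case
      have hcard : γ.card = γ'.card + 1 := by
        rw [hcard', Finset.card_erase_of_mem h0]
        have := Finset.card_pos.mpr ⟨(0 : Fin (m+1)), h0⟩
        omega
      have hμ0 : μ 0 = gaussianReal 0 v := by rw [hμ]; simp [h0]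
      have hF : Measurable (fun t : ℝ => ν (Prod.mk t ⁻¹' B)) :=
        measurable_measure_prodMk_left hB
      rw [hμ0, gaussianReal_of_var_ne_zero 0 hv,
        lintegral_withDensity_eq_lintegral_mul volume (measurable_gaussianPDF 0 v) hF]
      rw [hcard]
      have := key1 V C hV hC v hvv (c 0) r (hc 0) hr γ'.card (fun t => ν (Prod.mk t ⁻¹' B)) ?_
      · convert this using 2
        push_cast
        ring
        rfl
      intro t hts
      have hslice : Prod.mk t ⁻¹' B
          = {b : Fin m → ℝ | ∑ j, |b j - c (Fin.succ j)| < r - |t - c 0|} := by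
        ext b
        simp only [Set.mem_preimage, hBdef, Set.mem_setOf_eq]
        constructor <;> intro h <;> linarith
      show ENNReal.ofReal _ ≤ ν (Prod.mk t ⁻¹' B)
      rw [hslice]
      exact ihb _ (by linarith)
    · -- dirac case
      have hcard : γ.card = γ'.card := by
        rw [hcard', Finset.erase_eq_of_notMem h0]
      have hμ0 : μ 0 = Measure.dirac 0 := by rw [hμ]; simp [h0]
      rw [hμ0, lintegral_dirac]
      have hslice : Prod.mk (0:ℝ) ⁻¹' B
          = {b : Fin m → ℝ | ∑ j, |b j - c (Fin.succ j)| < r} := by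
        ext b
        simp only [Set.mem_preimage, hBdef, Set.mem_setOf_eq, hc0 0 h0, sub_zero, abs_zero,
          zero_sub, abs_neg, zero_add]
      rw [hslice, hcard]
      exact ihb r hr


theorem sparsity_gaussian_small_ball_explicit (p S n : ℕ) (hS : 0 < S) (hSp : S ≤ p)
    (hp : 1 < p) (hn : 1 ≤ n) (σ V C : ℝ) (hσ : 0 < σ) (hV : 0 < V) (hC : 0 ≤ C)
    (C₁ : ℝ) (hC₁ : C₁ = (1 / 3) * Real.sqrt (2 * σ ^ 2 * 2 * Real.log p / n))
    (Pr : Measure (Fin p → ℝ))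
    (hPr : Pr = ((p.choose S : ℝ≥0∞))⁻¹ •
      ∑ γ ∈ Finset.univ.filter (fun γ : Finset (Fin p) => γ.card = S),
        Measure.pi (fun i => if i ∈ γ then gaussianReal 0 (Real.toNNReal (V ^ 2))
          else Measure.dirac 0))
    (β0 : Fin p → ℝ) (T : Finset (Fin p)) (hT : T.card ≤ S)
    (hsupp : ∀ i ∉ T, β0 i = 0) (hβ0 : ∀ i, |β0 i| ≤ C) :
    (2 * C₁) ^ S / (S.factorial : ℝ) ≥ (2 * C₁) ^ S / (S : ℝ) ^ S ∧
    Pr {β : Fin p → ℝ | ∑ i, |β i - β0 i| < C₁} ≥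
      ENNReal.ofReal (Real.exp (-C₁ ^ 2 / (2 * V ^ 2)) *
        (2 * σ / (3 * Real.exp (C ^ 2 / (2 * V ^ 2)) *
          Real.sqrt (π * Real.exp 1 ^ 2 * V ^ 2))) ^ S *
        ((1 / (p : ℝ)) * Real.sqrt (Real.log p / n)) ^ S) := by
  have hppos : (0:ℝ) < p := by positivity
  have hnpos : (0:ℝ) < n := by exact_mod_cast hn
  have hlog : 0 < Real.log p := Real.log_pos (by exact_mod_cast hp)
  have hC₁pos : 0 < C₁ := by rw [hC₁]; positivity
  have hC₁eq : C₁ = (2 * σ / 3) * Real.sqrt (Real.log p / n) := by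
    rw [hC₁, show 2 * σ ^ 2 * 2 * Real.log p / n = (2 * σ) ^ 2 * (Real.log p / n) by ring,
      Real.sqrt_mul (by positivity), Real.sqrt_sq (by positivity)]
    ring
  constructor
  · -- part 1
    have h1 : (S.factorial : ℝ) ≤ (S : ℝ) ^ S := by exact_mod_cast Nat.factorial_le_pow S
    apply div_le_div_of_nonneg_left (by positivity) (by positivity) h1
  · -- part 2
    obtain ⟨γ₀, hTγ, -, hγcard⟩ := Finset.exists_subsuperset_card_eq (Finset.subset_univ T)
      hT (by simpa using hSp)
    set A : Set (Fin p → ℝ) := {β | ∑ i, |β i - β0 i| < C₁} with hA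
    set K : ℝ := (Real.sqrt (2 * π * V ^ 2))⁻¹ with hK
    have hKpos : 0 < K := by rw [hK]; positivity
    set Bnd : ℝ := K ^ S * Real.exp (-((S : ℝ) * C ^ 2 + C₁ ^ 2) / (2 * V ^ 2)) * C₁ ^ S /
      (S.factorial : ℝ) with hBnd
    -- step 1: bound single-γ measure
    have hmain : ENNReal.ofReal Bnd ≤
        Measure.pi (fun i => if i ∈ γ₀ then gaussianReal 0 (Real.toNNReal (V ^ 2))
          else Measure.dirac 0) A := by
      have := main_ind V C hV hC p γ₀ β0 hβ0
        (fun i hi => hsupp i (fun hiT => hi (hTγ hiT))) C₁ hC₁pos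
      rwa [hγcard] at this
    -- step 2: Pr ≥ choose⁻¹ * single-γ
    have hPrA : ((p.choose S : ℝ≥0∞))⁻¹ *
        Measure.pi (fun i => if i ∈ γ₀ then gaussianReal 0 (Real.toNNReal (V ^ 2))
          else Measure.dirac 0) A ≤ Pr A := by
      rw [hPr, Measure.smul_apply, smul_eq_mul, Measure.finset_sum_apply]
      apply mul_le_mul_right
      exact Finset.single_le_sum (f := fun γ : Finset (Fin p) =>
          Measure.pi (fun i => if i ∈ γ then gaussianReal 0 (Real.toNNReal (V ^ 2))
            else Measure.dirac 0) A)
        (fun γ _ => zero_le) (Finset.mem_filter.mpr ⟨Finset.mem_univ _, hγcard⟩)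
    -- step 3: choose⁻¹ ≥ ofReal (S! / p^S)
    have hchoose : ENNReal.ofReal ((S.factorial : ℝ) / (p : ℝ) ^ S) ≤
        ((p.choose S : ℝ≥0∞))⁻¹ := by
      have hcpos : (0:ℝ) < (p.choose S : ℝ) := by
        exact_mod_cast Nat.choose_pos hSp
      rw [show ((p.choose S : ℝ≥0∞)) = ENNReal.ofReal ((p.choose S : ℝ)) by
          rw [ENNReal.ofReal_natCast],
        ← ENNReal.ofReal_inv_of_pos hcpos]
      apply ENNReal.ofReal_le_ofReal
      rw [inv_eq_one_div, div_le_div_iff₀ (by positivity) hcpos, one_mul]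
      have h : S.factorial * p.choose S ≤ p ^ S := by
        rw [← Nat.descFactorial_eq_factorial_mul_choose]
        exact Nat.descFactorial_le_pow p S
      exact_mod_cast h
    -- step 4: real inequality
    have hreal : Real.exp (-C₁ ^ 2 / (2 * V ^ 2)) *
        (2 * σ / (3 * Real.exp (C ^ 2 / (2 * V ^ 2)) *
          Real.sqrt (π * Real.exp 1 ^ 2 * V ^ 2))) ^ S *
        ((1 / (p : ℝ)) * Real.sqrt (Real.log p / n)) ^ S ≤
        (S.factorial : ℝ) / (p : ℝ) ^ S * Bnd := by
      have hfne : (S.factorial : ℝ) ≠ 0 := by positivity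
      have hexp_split : Real.exp (-((S:ℝ) * C ^ 2 + C₁ ^ 2) / (2 * V ^ 2)) =
          Real.exp (-C₁ ^ 2 / (2 * V ^ 2)) * Real.exp (-(C ^ 2) / (2 * V ^ 2)) ^ S := by
        rw [← Real.exp_nat_mul, ← Real.exp_add]
        congr 1
        ring
      have hRHS : (S.factorial : ℝ) / (p : ℝ) ^ S * Bnd =
          Real.exp (-C₁ ^ 2 / (2 * V ^ 2)) *
            ((K * Real.exp (-(C ^ 2) / (2 * V ^ 2)) * C₁) / p) ^ S := by
        rw [hBnd, hexp_split, div_pow, mul_pow, mul_pow]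
        field_simp
      have he2 : (2:ℝ) ≤ Real.exp 1 := by linarith [Real.add_one_le_exp 1]
      have hsqle : Real.sqrt (2 * π * V ^ 2) ≤ Real.sqrt (π * Real.exp 1 ^ 2 * V ^ 2) := by
        apply Real.sqrt_le_sqrt
        nlinarith [Real.pi_pos, sq_nonneg V, mul_nonneg Real.pi_pos.le (sq_nonneg V),
          sq_nonneg (Real.exp 1 - 2)]
      have hsq2pos : (0:ℝ) < Real.sqrt (2 * π * V ^ 2) := Real.sqrt_pos.mpr (by positivity)
      have hsq1pos : (0:ℝ) < Real.sqrt (π * Real.exp 1 ^ 2 * V ^ 2) :=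
        Real.sqrt_pos.mpr (by positivity)
      have hXpos : (0:ℝ) < Real.exp (C ^ 2 / (2 * V ^ 2)) := Real.exp_pos _
      have hab : (2 * σ / (3 * Real.exp (C ^ 2 / (2 * V ^ 2)) *
            Real.sqrt (π * Real.exp 1 ^ 2 * V ^ 2))) *
            ((1 / (p : ℝ)) * Real.sqrt (Real.log p / n)) ≤
          K * Real.exp (-(C ^ 2) / (2 * V ^ 2)) * C₁ / p := by
        have hLeq : (2 * σ / (3 * Real.exp (C ^ 2 / (2 * V ^ 2)) *
              Real.sqrt (π * Real.exp 1 ^ 2 * V ^ 2))) *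
              ((1 / (p : ℝ)) * Real.sqrt (Real.log p / n)) =
            C₁ / ((p : ℝ) * Real.exp (C ^ 2 / (2 * V ^ 2)) *
              Real.sqrt (π * Real.exp 1 ^ 2 * V ^ 2)) := by
          rw [hC₁eq]
          field_simp
        have hReq : K * Real.exp (-(C ^ 2) / (2 * V ^ 2)) * C₁ / p =
            C₁ / ((p : ℝ) * Real.exp (C ^ 2 / (2 * V ^ 2)) *
              Real.sqrt (2 * π * V ^ 2)) := by
          rw [hK, show -(C ^ 2) / (2 * V ^ 2) = -(C ^ 2 / (2 * V ^ 2)) by ring, Real.exp_neg]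
          field_simp
        rw [hLeq, hReq]
        gcongr
      calc Real.exp (-C₁ ^ 2 / (2 * V ^ 2)) *
            (2 * σ / (3 * Real.exp (C ^ 2 / (2 * V ^ 2)) *
              Real.sqrt (π * Real.exp 1 ^ 2 * V ^ 2))) ^ S *
            ((1 / (p : ℝ)) * Real.sqrt (Real.log p / n)) ^ S
          = Real.exp (-C₁ ^ 2 / (2 * V ^ 2)) *
            ((2 * σ / (3 * Real.exp (C ^ 2 / (2 * V ^ 2)) *
              Real.sqrt (π * Real.exp 1 ^ 2 * V ^ 2))) *
            ((1 / (p : ℝ)) * Real.sqrt (Real.log p / n))) ^ S := by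
            rw [mul_pow]
            ring
        _ ≤ Real.exp (-C₁ ^ 2 / (2 * V ^ 2)) *
            ((K * Real.exp (-(C ^ 2) / (2 * V ^ 2)) * C₁) / p) ^ S := by
            apply mul_le_mul_of_nonneg_left _ (Real.exp_nonneg _)
            apply pow_le_pow_left₀ (by positivity) hab
        _ = (S.factorial : ℝ) / (p : ℝ) ^ S * Bnd := hRHS.symm
    -- combine
    calc ENNReal.ofReal (Real.exp (-C₁ ^ 2 / (2 * V ^ 2)) *
          (2 * σ / (3 * Real.exp (C ^ 2 / (2 * V ^ 2)) *
            Real.sqrt (π * Real.exp 1 ^ 2 * V ^ 2))) ^ S *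
          ((1 / (p : ℝ)) * Real.sqrt (Real.log p / n)) ^ S)
        ≤ ENNReal.ofReal ((S.factorial : ℝ) / (p : ℝ) ^ S * Bnd) :=
          ENNReal.ofReal_le_ofReal hreal
      _ = ENNReal.ofReal ((S.factorial : ℝ) / (p : ℝ) ^ S) * ENNReal.ofReal Bnd :=
          ENNReal.ofReal_mul (by positivity)
      _ ≤ ((p.choose S : ℝ≥0∞))⁻¹ *
          Measure.pi (fun i => if i ∈ γ₀ then gaussianReal 0 (Real.toNNReal (V ^ 2))
            else Measure.dirac 0) A := mul_le_mul' hchoose hmain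
      _ ≤ Pr A := hPrA
end
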